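/- arXiv:1904.05928 — 4 statements merged into one kernel-verified Lean document; each statement's English description precedes it below -/
import Mathlib

section
/- Fix a selective ultrafilter p on ω. Let I ⊆ [ω, κ) be such that {[f_ξ]_p : ξ ∈ I} ∪ {[χ_{→μ}]_p : μ < κ} is a ℚ-basis of G^ω/p. Let D be a nonempty finite subset of I, let r ∈ G with supp r = D, and let C be a countably infinite subset of κ with D ⊆ C and ⋃_{n∈ω} supp f_ξ(n) ⊆ C for every ξ ∈ C ∩ I. Let B' ∈ p be such that the sequence (Σ_{μ∈D} r(μ)·f_μ(n) : n ∈ B') is one-to-one, let 𝔸 be an almost disjoint family on B' of cardinality 𝔠, and for each x ∈ 𝔸 let h_x : ω → {Σ_{μ∈D} r(μ)·f_μ(n) : n ∈ x} be a bijection (so h_x ∈ G^ω). Then there exist distinct x₀, x₁ ∈ 𝔸 such that {[f_ξ]_p : ξ ∈ C ∩ I} ∪ {[χ_{→μ}]_p : μ < κ} ∪ {[h_{x₀}]_p, [h_{x₁}]_p} is ℚ-linearly independent in G^ω/p. -/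
open Filter Topology Set Pointwise

noncomputable section

/-- Index set of a cardinal `κ`: the ordinals below `κ.ord`. -/
abbrev Idx (κ : Cardinal) : Type _ := {o : Ordinal // o < κ.ord}

/-- `G = ℚ^(κ)`, the direct sum of `κ` copies of `ℚ`. -/
abbrev Gk (κ : Cardinal) : Type _ := Idx κ →₀ ℚ

/-- `χ_μ`, the canonical generator at coordinate `μ`. -/
def chi {κ : Cardinal} (μ : Idx κ) : Gk κ := Finsupp.single μ 1

/-- A selective ultrafilter: for every partition of `ω` (given by the fibers of a function)
into sets not belonging to `p`, there is a member of `p` meeting each piece in at most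
one point. -/
def IsSelective (p : Ultrafilter ℕ) : Prop :=
  ∀ f : ℕ → ℕ, (∀ k, {n | f n = k} ∉ p) → ∃ A ∈ p, Set.InjOn f A

/-- `l` is a `p`-limit of the sequence `x`. -/
def IsPLim {X : Type*} [TopologicalSpace X] (p : Ultrafilter ℕ) (x : ℕ → X) (l : X) : Prop :=
  ∀ U ∈ nhds l, {n | x n ∈ U} ∈ p

/-- The class `[f]_p` of `f ∈ G^ω` in the ultrapower `G^ω/p`. -/
def germOf {κ : Cardinal} (p : Ultrafilter ℕ) (f : ℕ → Gk κ) :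
    Filter.Germ (p : Filter ℕ) (Gk κ) := Filter.Germ.ofFun f

/-- The subgroup (indeed `ℚ`-subspace) `ℚ^(C)` of elements supported in `C`. -/
def Qc {κ : Cardinal} (C : Set (Idx κ)) : Submodule ℚ (Gk κ) where
  carrier := {g : Gk κ | ↑g.support ⊆ C}
  add_mem' := by
    classical
    intro a b ha hb
    exact (Finset.coe_subset.mpr Finsupp.support_add).trans
      (by rw [Finset.coe_union]; exact Set.union_subset ha hb)
  zero_mem' := by simp
  smul_mem' := by
    intro c g hg
    exact (Finset.coe_subset.mpr Finsupp.support_smul).trans hg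

/-- The circle group `𝕋 = ℝ/ℤ`. -/
abbrev Circ : Type := UnitAddCircle

/-- The quotient map `ℝ → 𝕋`. -/
def toCirc : ℝ → Circ := fun x => (x : Circ)

/-- The open arc which is the image of the interval `(a, a + ε)`. -/
def arcOf (a ε : ℝ) : Set Circ := toCirc '' Set.Ioo a (a + ε)

/-- A subset of `𝕋` is an (open) arc if it is the image of an open interval. -/
def IsArc (s : Set Circ) : Prop := ∃ a b : ℝ, s = toCirc '' Set.Ioo a b

/-- `s` is an arc of length `ε`. -/
def HasArcLen (s : Set Circ) (ε : ℝ) : Prop := ∃ a : ℝ, s = arcOf a ε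

/-- The setwise rational multiple of a subset of `𝕋`. -/
def smulArc (q : ℚ) (s : Set Circ) : Set Circ :=
  {y | ∃ x : ℝ, toCirc x ∈ s ∧ y = toCirc ((q : ℝ) * x)}

/-- The support of an arc function. -/
def arcSupp {κ : Cardinal} (ψ : Idx κ → Set Circ) : Set (Idx κ) := {ξ | ψ ξ ≠ Set.univ}

/-- An arc function: finitely many coordinates carry a proper arc, the rest are `𝕋`. -/
def IsArcFun {κ : Cardinal} (ψ : Idx κ → Set Circ) : Prop :=
  (∀ ξ, IsArc (ψ ξ)) ∧ (arcSupp ψ).Finite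

/-- An `ε`-arc function. -/
def IsArcFunLen {κ : Cardinal} (ψ : Idx κ → Set Circ) (ε : ℝ) : Prop :=
  IsArcFun ψ ∧ ∀ ξ ∈ arcSupp ψ, HasArcLen (ψ ξ) ε

/-- The order on arc functions: `ψ ≤ φ` iff coordinatewise either equal or with closure
contained. -/
def ArcFunLE {κ : Cardinal} (ψ φ : Idx κ → Set Circ) : Prop :=
  ∀ ξ, ψ ξ = φ ξ ∨ closure (ψ ξ) ⊆ φ ξ

/-- `χ` is an `n`-solution of the arc equation `(ϱ, A, K·F, K n, U)`, where the family of the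
equation is `K·F = {K·h : h ∈ F}` and the arcs `U` are indexed by the original family `F`. -/
def IsNSolK {κ : Cardinal} (ϱ : Idx κ → Set Circ) (F : Set (ℕ → Gk κ)) (Kn : ℕ)
    (U : (ℕ → Gk κ) → Set Circ) (n : ℕ) (χ : Idx κ → Set Circ) : Prop :=
  IsArcFun χ ∧ ArcFunLE (fun ξ => smulArc (Kn : ℚ) (χ ξ)) ϱ ∧
  ∀ h ∈ F, (∑ μ ∈ (h n).support, smulArc ((Kn : ℚ) * h n μ) (χ μ)) ⊆ U h

/-- A sequence in `G^ω` all of whose values are integers (i.e. an element of `(ℤ^(κ))^ω`). -/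
def IsIntSeq {κ : Cardinal} (h : ℕ → Gk κ) : Prop := ∀ n μ, ∃ z : ℤ, h n μ = (z : ℚ)

/-- Monotone (not necessarily strictly) on `A`. -/
def MonoOnA (A : Set ℕ) (g : ℕ → ℝ) : Prop := MonotoneOn g A ∨ AntitoneOn g A

/-- Strictly monotone on `A`. -/
def StrictMonoOnA (A : Set ℕ) (g : ℕ → ℝ) : Prop := StrictMonoOn g A ∨ StrictAntiOn g A

/-- The sequence `g`, along `A`, converges to an element of the extended real line. -/
def ConvETo (A : Set ℕ) (g : ℕ → ℝ) : Prop :=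
  (∃ c : ℝ, Tendsto g (atTop ⊓ 𝓟 A) (nhds c)) ∨
    Tendsto g (atTop ⊓ 𝓟 A) atTop ∨ Tendsto g (atTop ⊓ 𝓟 A) atBot

/-- A rational stack. -/
structure RationalStack (κ : Cardinal) (p : Ultrafilter ℕ) where
  A : Set ℕ
  k0 : ℕ
  k1 : ℕ
  l : ℕ → ℕ
  ν : ℕ → Idx κ
  ζ : ℕ → ℕ → Idx κ
  K : ℕ → ℕ
  T : ℕ
  Br : ℕ → ℕ → Set (ℕ → Gk κ)
  A_infinite : A.Infinite
  k0_le_k1 : k0 ≤ k1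
  k1_pos : 0 < k1
  T_pos : 0 < T
  K_ge_two : ∀ n, 2 ≤ K n
  K_div : ∀ n ∈ A, (Nat.factorial n * T) ∣ K n
  Br_finite : ∀ i < k1, ∀ j < l i, (Br i j).Finite
  Br_int : ∀ i < k1, ∀ j < l i, ∀ h ∈ Br i j, IsIntSeq h
  cond_i : ∀ i < k0, ∀ n ∈ A, ζ i n = ν i
  cond_ii_a : ∀ i < k0, ∀ i' < k0, i ≠ i' → ν i ≠ ν i'
  cond_ii_b : ∀ i < k0, ∀ j, k0 ≤ j → j < k1 → ∀ n ∈ A, ν i ≠ ζ j n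
  cond_ii_c : ∀ j j' : ℕ, k0 ≤ j → j < k1 → k0 ≤ j' → j' < k1 →
    ∀ n ∈ A, ∀ n' ∈ A, (j, n) ≠ (j', n') → ζ j n ≠ ζ j' n'
  cond_iii : ∀ i < k1, ∀ j < l i, ∀ h ∈ Br i j, ∀ n ∈ A, ζ i n ∈ (h n).support
  cond_iv : ∀ i, ∀ i', i < i' → i' < k1 → ∀ j < l i', ∀ h ∈ Br i' j, ∀ n ∈ A,
    ζ i n ∉ (h n).support
  cond_v : ∀ i < k1, ∀ j < l i, ∀ h ∈ Br i j,
    MonoOnA A (fun n => (h n (ζ i n) : ℝ) / (K n : ℝ)) ∧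
    ConvETo A (fun n => (h n (ζ i n) : ℝ) / (K n : ℝ))
  cond_vi : ∀ i < k1, ∀ j < l i, ∃ hs ∈ Br i j, ∃ θ : (ℕ → Gk κ) → ℝ,
    (∀ h ∈ Br i j, Tendsto (fun n => (h n (ζ i n) : ℝ) / (hs n (ζ i n) : ℝ))
      (atTop ⊓ 𝓟 A) (nhds (θ h))) ∧
    LinearIndependent ℚ (fun h : (Br i j) => θ h.1)
  cond_vii : ∀ i < k1, ∀ j' j : ℕ, j' < j → j < l i → ∀ h ∈ Br i j, ∀ h' ∈ Br i j',
    MonoOnA A (fun n => (h n (ζ i n) : ℝ) / (h' n (ζ i n) : ℝ)) ∧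
    Tendsto (fun n => (h n (ζ i n) : ℝ) / (h' n (ζ i n) : ℝ)) (atTop ⊓ 𝓟 A) (nhds 0)
  cond_viii : ∀ i < k0, ∃ j < l i, (fun n => ((K n : ℚ) / (T : ℚ)) • chi (ν i)) ∈ Br i j
  cond_ix : ∀ i < k1, ∀ j < l i, ∀ h ∈ Br i j,
    StrictMonoOn (fun n => |(h n (ζ i n) : ℝ)|) A
  cond_x : ∀ i < k1, ∀ j < l i, ∀ h ∈ Br i j, ∀ h' ∈ Br i j, h ≠ h' →
    (∀ n ∈ A, |h n (ζ i n)| > |h' n (ζ i n)|) ∨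
    (∀ n ∈ A, |h n (ζ i n)| = |h' n (ζ i n)|) ∨
    (∀ n ∈ A, |h n (ζ i n)| < |h' n (ζ i n)|)
  cond_xi : ∀ μ : Idx κ, ∀ i, k0 ≤ i → i < k1 → ∀ j < l i, ∀ g ∈ Br i j,
    {n | μ ∈ (g n).support} ∈ p → ∃ c : ℚ, ∀ n ∈ A, g n μ / (K n : ℚ) = c

/-- `𝒜 = 𝒢 ∪ {χ_{→ν_i} : i < k₀}`. -/
def stackA {κ : Cardinal} {p : Ultrafilter ℕ} (S : RationalStack κ p)
    (Gc : Set (ℕ → Gk κ)) : Set (ℕ → Gk κ) :=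
  Gc ∪ {g | ∃ i < S.k0, g = fun _ => chi (S.ν i)}

/-- `𝒞 = (⋃_{i<k₁, j<l_i} 𝓑_{i,j}) / K`. -/
def stackC {κ : Cardinal} {p : Ultrafilter ℕ} (S : RationalStack κ p) : Set (ℕ → Gk κ) :=
  {g | ∃ i < S.k1, ∃ j < S.l i, ∃ h ∈ S.Br i j, g = fun n => ((S.K n : ℚ))⁻¹ • h n}

/-- `(𝒮, 𝒜, 𝒞, 𝓜, 𝓝)` is adapted to `𝒢`. -/
def Adapted {κ : Cardinal} (p : Ultrafilter ℕ) (S : RationalStack κ p)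
    (Gc : Set (ℕ → Gk κ)) (M N : (ℕ → Gk κ) → (ℕ → Gk κ) → ℤ) : Prop :=
  (Submodule.span ℚ {x : Filter.Germ (p : Filter ℕ) (Gk κ) | ∃ f ∈ stackA S Gc, x = germOf p f} =
    Submodule.span ℚ {x : Filter.Germ (p : Filter ℕ) (Gk κ) | ∃ h ∈ stackC S, x = germOf p h}) ∧
  (∀ n ∈ S.A, ∀ f ∈ stackA S Gc, f n = ∑ᶠ h ∈ stackC S, (M f h : ℚ) • h n) ∧
  (∀ n ∈ S.A, ∀ h ∈ stackC S, h n = ((S.T : ℚ) ^ 2)⁻¹ • ∑ᶠ f ∈ stackA S Gc, (N h f : ℚ) • f n) ∧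
  (∀ f ∈ stackA S Gc, IsIntSeq (fun n => (S.K n : ℚ) • f n)) ∧
  (∀ h ∈ stackC S, IsIntSeq (fun n => (S.K n : ℚ) • h n))

/-- Euclidean distance on `𝕋^r`. -/
def euclDist {r : ℕ} (x y : Fin r → Circ) : ℝ := Real.sqrt (∑ i, (dist (x i) (y i)) ^ 2)


section AuxStatement5

/-- `germOf` as a `ℚ`-linear map. -/
def germLM (κ : Cardinal) (p : Ultrafilter ℕ) :
    (ℕ → Gk κ) →ₗ[ℚ] Filter.Germ (p : Filter ℕ) (Gk κ) where
  toFun := germOf p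
  map_add' := fun _ _ => rfl
  map_smul' := fun _ _ => rfl

/-- The constant-sequence map as a `ℚ`-linear map. -/
def constLM (κ : Cardinal) : Gk κ →ₗ[ℚ] (ℕ → Gk κ) where
  toFun := fun w _ => w
  map_add' := fun _ _ => rfl
  map_smul' := fun _ _ => rfl

/-- The submodule of germs represented by sequences with values supported in `C`. -/
def MCsub (κ : Cardinal) (p : Ultrafilter ℕ) (C : Set (Idx κ)) :
    Submodule ℚ (Filter.Germ (p : Filter ℕ) (Gk κ)) :=
  Submodule.map (germLM κ p) (Submodule.pi Set.univ fun _ : ℕ => Qc C)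

lemma finsupp_eq_sum_chi {κ : Cardinal} (v : Gk κ) :
    v = ∑ μ ∈ v.support, v μ • chi μ := by
  classical
  conv_lhs => rw [← Finsupp.sum_single v]
  rw [Finsupp.sum]
  refine Finset.sum_congr rfl fun μ _ => ?_
  rw [chi, Finsupp.smul_single, smul_eq_mul, mul_one]

lemma aux_const_germ {κ : Cardinal} (p : Ultrafilter ℕ) (v : Gk κ) :
    germOf p (fun _ => v) = ∑ μ ∈ v.support, v μ • germOf p (fun _ => chi μ) := by
  classical
  calc germOf p (fun _ => v) = (germLM κ p).comp (constLM κ) v := rfl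
    _ = (germLM κ p).comp (constLM κ) (∑ μ ∈ v.support, v μ • chi μ) := by
        rw [← finsupp_eq_sum_chi]
    _ = ∑ μ ∈ v.support, v μ • ((germLM κ p).comp (constLM κ) (chi μ)) := by
        rw [map_sum]
        exact Finset.sum_congr rfl fun μ _ => map_smul _ _ _
    _ = ∑ μ ∈ v.support, v μ • germOf p (fun _ => chi μ) := rfl

lemma aux_pair_indep {K : Type*} [Field K] {M : Type*} [AddCommGroup M] [Module K M]
    {ι : Type*} (b : ι → M) (hb : LinearIndependent K b)
    (u : Fin 2 → M) (h0 : u 0 ∉ Submodule.span K (Set.range b))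
    (h1 : u 1 ∉ Submodule.span K (Set.range b) ⊔ K ∙ u 0) :
    LinearIndependent K (Sum.elim b u) := by
  rw [linearIndependent_sum]
  have hb' : LinearIndependent K (Sum.elim b u ∘ Sum.inl) := hb
  have hu : LinearIndependent K (Sum.elim b u ∘ Sum.inr) := by
    have : LinearIndependent K u := by
      rw [linearIndependent_fin2]
      constructor
      · intro hz; exact h1 (hz ▸ Submodule.zero_mem _)
      · intro a ha
        rcases eq_or_ne a 0 with rfl | hane
        · rw [zero_smul] at ha; exact h0 (ha ▸ Submodule.zero_mem _)
        · refine h1 (Submodule.mem_sup_right (Submodule.mem_span_singleton.mpr ⟨a⁻¹, ?_⟩))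
          rw [← ha, smul_smul, inv_mul_cancel₀ hane, one_smul]
    exact this
  refine ⟨hb', hu, ?_⟩
  rw [Submodule.disjoint_def]
  intro z hz1 hz2
  have hz2' : z ∈ Submodule.span K {u 0, u 1} := by
    refine Submodule.span_mono ?_ hz2
    rintro _ ⟨i, rfl⟩
    fin_cases i
    · exact Set.mem_insert _ _
    · exact Set.mem_insert_of_mem _ rfl
  obtain ⟨a, c, hac⟩ := Submodule.mem_span_pair.mp hz2'
  rcases eq_or_ne c 0 with rfl | hcne
  · rw [zero_smul, add_zero] at hac
    rcases eq_or_ne a 0 with rfl | hane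
    · rw [zero_smul] at hac; exact hac.symm
    · exfalso
      refine h0 ?_
      have : u 0 = a⁻¹ • z := by rw [← hac, smul_smul, inv_mul_cancel₀ hane, one_smul]
      exact this ▸ Submodule.smul_mem _ _ hz1
  · exfalso
    refine h1 ?_
    have hmem : z - a • u 0 ∈ Submodule.span K (Set.range b) ⊔ K ∙ u 0 :=
      Submodule.sub_mem _ (Submodule.mem_sup_left hz1)
        (Submodule.mem_sup_right (Submodule.mem_span_singleton.mpr ⟨a, rfl⟩))
    have : u 1 = c⁻¹ • (z - a • u 0) := by
      rw [← hac, add_sub_cancel_left, smul_smul, inv_mul_cancel₀ hcne, one_smul]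
    exact this ▸ Submodule.smul_mem _ _ hmem

lemma aux_countable_span {K : Type*} [Field K] [Countable K] {M : Type*} [AddCommGroup M]
    [Module K M] (s : Set M) (hs : s.Countable) :
    ((Submodule.span K s : Submodule K M) : Set M).Countable := by
  haveI := hs.to_subtype
  have h1 : Submodule.span K s = Submodule.span K (Set.range (Subtype.val : s → M)) := by
    rw [Subtype.range_coe]
  rw [h1, ← Finsupp.range_linearCombination]
  exact Set.countable_range _

end AuxStatement5

/-- the Claim in Lemma main.lemma.2. -/
theorem statement5 (κ : Cardinal) (hκ : Cardinal.aleph0 ≤ κ)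
    (p : Ultrafilter ℕ) (hp : IsSelective p)
    (f : Idx κ → ℕ → Gk κ)
    (hfsupp : ∀ ξ : Idx κ, Ordinal.omega0 ≤ ξ.1 → ∀ n : ℕ, ∀ μ ∈ (f ξ n).support, μ.1 < ξ.1)
    (hfenum : ∀ g : ℕ → Gk κ, ∃ ξ : Idx κ, Ordinal.omega0 ≤ ξ.1 ∧ f ξ = g)
    (I : Set (Idx κ)) (hIω : ∀ ξ ∈ I, Ordinal.omega0 ≤ ξ.1)
    (hbasis_ind : LinearIndependent ℚ (fun x : I ⊕ Idx κ =>
      Sum.elim (fun ξ : I => germOf p (f ξ.1)) (fun μ : Idx κ => germOf p (fun _ => chi μ)) x))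
    (hbasis_span : ⊤ ≤ Submodule.span ℚ (Set.range (fun x : I ⊕ Idx κ =>
      Sum.elim (fun ξ : I => germOf p (f ξ.1)) (fun μ : Idx κ => germOf p (fun _ => chi μ)) x)))
    (D : Finset (Idx κ)) (hDne : D.Nonempty) (hDI : ↑D ⊆ I)
    (r : Gk κ) (hr : r.support = D)
    (C : Set (Idx κ)) (hCcount : C.Countable) (hCinf : C.Infinite)
    (hDC : ↑D ⊆ C)
    (hfC : ∀ ξ ∈ C ∩ I, ∀ n : ℕ, ↑(f ξ n).support ⊆ C)
    (B' : Set ℕ) (hB' : B' ∈ p)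
    (hinj : Set.InjOn (fun n => ∑ μ ∈ D, r μ • f μ n) B')
    (𝔸 : Set (Set ℕ))
    (h𝔸inf : ∀ x ∈ 𝔸, x.Infinite) (h𝔸sub : ∀ x ∈ 𝔸, x ⊆ B')
    (h𝔸ad : ∀ x ∈ 𝔸, ∀ y ∈ 𝔸, x ≠ y → (x ∩ y).Finite)
    (h𝔸card : Cardinal.mk 𝔸 = Cardinal.continuum)
    (h : Set ℕ → ℕ → Gk κ)
    (hbij : ∀ x ∈ 𝔸, Set.BijOn (h x) Set.univ {v : Gk κ | ∃ n ∈ x, v = ∑ μ ∈ D, r μ • f μ n}) :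
    ∃ x₀ ∈ 𝔸, ∃ x₁ ∈ 𝔸, x₀ ≠ x₁ ∧
      LinearIndependent ℚ (fun z : ((C ∩ I : Set (Idx κ)) ⊕ Idx κ) ⊕ Fin 2 =>
        Sum.elim
          (Sum.elim (fun ξ : (C ∩ I : Set (Idx κ)) => germOf p (f ξ.1))
            (fun μ : Idx κ => germOf p (fun _ => chi μ)))
          (fun i : Fin 2 => germOf p (h (if i = 0 then x₀ else x₁))) z) := by
  classical
  by_contra hcon
  push_neg at hcon
  -- p is nonprincipal: every member of p is infinite
  have hpinf : ∀ S ∈ p, S.Infinite := by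
    intro S hS
    by_contra hfin
    rw [Set.not_infinite] at hfin
    obtain ⟨a, -, hpa⟩ := Ultrafilter.eq_pure_of_finite_mem hfin hS
    obtain ⟨ξ₀, hξ₀D⟩ := hDne
    have hξ₀I : ξ₀ ∈ I := hDI hξ₀D
    have hLI : LinearIndependent ℚ (Sum.elim (fun ξ : I => germOf p (f ξ.1))
        (fun μ : Idx κ => germOf p (fun _ => chi μ))) := hbasis_ind
    rw [linearIndependent_sum] at hLI
    obtain ⟨hLI1, hLI2, hdisj⟩ := hLI
    have hz1 : germOf p (f ξ₀) ∈ Submodule.span ℚ (Set.range ((Sum.elim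
        (fun ξ : I => germOf p (f ξ.1))
        (fun μ : Idx κ => germOf p (fun _ => chi μ))) ∘ Sum.inl)) :=
      Submodule.subset_span ⟨⟨ξ₀, hξ₀I⟩, rfl⟩
    have heqc : germOf p (f ξ₀) = germOf p (fun _ => f ξ₀ a) := by
      refine Filter.Germ.coe_eq.mpr ?_
      have : {n | f ξ₀ n = f ξ₀ a} ∈ p := by
        rw [hpa]; exact Ultrafilter.mem_pure.mpr rfl
      exact this
    have hz2 : germOf p (f ξ₀) ∈ Submodule.span ℚ (Set.range ((Sum.elim
        (fun ξ : I => germOf p (f ξ.1))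
        (fun μ : Idx κ => germOf p (fun _ => chi μ))) ∘ Sum.inr)) := by
      rw [heqc, aux_const_germ]
      exact Submodule.sum_mem _ fun μ _ =>
        Submodule.smul_mem _ _ (Submodule.subset_span ⟨μ, rfl⟩)
    have hz0 : germOf p (f ξ₀) = 0 := Submodule.disjoint_def.mp hdisj _ hz1 hz2
    have hne := hLI1.ne_zero (⟨ξ₀, hξ₀I⟩ : I)
    exact hne hz0
  -- distinct members of 𝔸 give distinct germs
  have hKey : ∀ x ∈ 𝔸, ∀ y ∈ 𝔸, x ≠ y → germOf p (h x) ≠ germOf p (h y) := by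
    intro x hx y hy hxy heq
    have hev : {n | h x n = h y n} ∈ p := Filter.Germ.coe_eq.mp heq
    have hfin : {n | h x n = h y n}.Finite := by
      have hsub : {n | h x n = h y n} ⊆
          (h x) ⁻¹' ((fun m => ∑ μ ∈ D, r μ • f μ m) '' (x ∩ y)) := by
        intro n hn
        obtain ⟨m, hm, hmx⟩ := (hbij x hx).mapsTo (Set.mem_univ n)
        obtain ⟨m', hm', hmy⟩ := (hbij y hy).mapsTo (Set.mem_univ n)
        have hmm : m = m' := by
          refine hinj (h𝔸sub x hx hm) (h𝔸sub y hy hm') ?_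
          dsimp only
          rw [← hmx, ← hmy]
          exact hn
        exact ⟨m, ⟨hm, hmm ▸ hm'⟩, hmx.symm⟩
      refine Set.Finite.subset (Set.Finite.preimage ?_ ((h𝔸ad x hx y hy hxy).image _)) hsub
      exact ((hbij x hx).injOn).mono (Set.subset_univ _)
    exact (hpinf _ hev) hfin
  -- supports in C
  have hsumC : ∀ m : ℕ, (∑ μ ∈ D, r μ • f μ m) ∈ Qc C := by
    intro m
    refine Submodule.sum_mem _ fun μ hμ => Submodule.smul_mem _ _ ?_
    exact hfC μ ⟨hDC hμ, hDI hμ⟩ m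
  have hMCmem : ∀ u : ℕ → Gk κ, (∀ n, u n ∈ Qc C) → germOf p u ∈ MCsub κ p C :=
    fun u hu => Submodule.mem_map.mpr ⟨u, Submodule.mem_pi.mpr (fun n _ => hu n), rfl⟩
  have hhMC : ∀ x ∈ 𝔸, germOf p (h x) ∈ MCsub κ p C := by
    intro x hx
    refine hMCmem _ fun n => ?_
    obtain ⟨m, hm, hval⟩ := (hbij x hx).mapsTo (Set.mem_univ n)
    rw [hval]
    exact hsumC m
  -- independence of the base family
  have hbase : LinearIndependent ℚ (Sum.elim
      (fun ξ : (C ∩ I : Set (Idx κ)) => germOf p (f ξ.1))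
      (fun μ : Idx κ => germOf p (fun _ => chi μ))) := by
    have hincl : C ∩ I ⊆ I := Set.inter_subset_right
    have hφ : Function.Injective (Sum.map (Set.inclusion hincl) (id : Idx κ → Idx κ)) :=
      Function.Injective.sumMap (Set.inclusion_injective hincl) Function.injective_id
    have hres := hbasis_ind.comp _ hφ
    have heq : ((fun x : I ⊕ Idx κ => Sum.elim (fun ξ : I => germOf p (f ξ.1))
        (fun μ : Idx κ => germOf p (fun _ => chi μ)) x) ∘
          Sum.map (Set.inclusion hincl) (id : Idx κ → Idx κ)) =
        Sum.elim (fun ξ : (C ∩ I : Set (Idx κ)) => germOf p (f ξ.1))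
          (fun μ : Idx κ => germOf p (fun _ => chi μ)) := by
      funext z
      cases z with
      | inl a => rfl
      | inr b => rfl
    rwa [heq] at hres
  -- the pairwise dichotomy
  have hstep : ∀ x₀ ∈ 𝔸, ∀ x₁ ∈ 𝔸, x₀ ≠ x₁ →
      germOf p (h x₀) ∈ Submodule.span ℚ (Set.range (Sum.elim
        (fun ξ : (C ∩ I : Set (Idx κ)) => germOf p (f ξ.1))
        (fun μ : Idx κ => germOf p (fun _ => chi μ)))) ∨
      germOf p (h x₁) ∈ Submodule.span ℚ (Set.range (Sum.elim
        (fun ξ : (C ∩ I : Set (Idx κ)) => germOf p (f ξ.1))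
        (fun μ : Idx κ => germOf p (fun _ => chi μ)))) ⊔ ℚ ∙ germOf p (h x₀) := by
    intro x₀ h₀ x₁ h₁ hne
    by_contra hc
    push_neg at hc
    refine hcon x₀ h₀ x₁ h₁ hne ?_
    have h10 : (1 : Fin 2) ≠ 0 := by decide
    exact aux_pair_indep _ hbase
      (fun i : Fin 2 => germOf p (h (if i = 0 then x₀ else x₁)))
      (by simpa using hc.1) (by simpa [h10] using hc.2)
  -- a single extra germ suffices
  obtain ⟨u₀, hu₀MC, hu₀all⟩ : ∃ u₀, u₀ ∈ MCsub κ p C ∧ ∀ x ∈ 𝔸,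
      germOf p (h x) ∈ Submodule.span ℚ (Set.range (Sum.elim
        (fun ξ : (C ∩ I : Set (Idx κ)) => germOf p (f ξ.1))
        (fun μ : Idx κ => germOf p (fun _ => chi μ)))) ⊔ ℚ ∙ u₀ := by
    by_cases hall : ∀ x ∈ 𝔸, germOf p (h x) ∈ Submodule.span ℚ (Set.range (Sum.elim
        (fun ξ : (C ∩ I : Set (Idx κ)) => germOf p (f ξ.1))
        (fun μ : Idx κ => germOf p (fun _ => chi μ))))
    · exact ⟨0, Submodule.zero_mem _, fun x hx => Submodule.mem_sup_left (hall x hx)⟩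
    · push_neg at hall
      obtain ⟨xs, hxs, hxsW⟩ := hall
      refine ⟨germOf p (h xs), hhMC xs hxs, ?_⟩
      intro x hx
      by_cases hxx : xs = x
      · subst hxx
        exact Submodule.mem_sup_right (Submodule.mem_span_singleton_self _)
      · rcases hstep xs hxs x hx hxx with hW | hO
        · exact absurd hW hxsW
        · exact hO
  -- the countable sets of germs
  have hrange : Set.range (Sum.elim
      (fun ξ : (C ∩ I : Set (Idx κ)) => germOf p (f ξ.1))
      (fun μ : Idx κ => germOf p (fun _ => chi μ))) =
      Set.range (fun ξ : (C ∩ I : Set (Idx κ)) => germOf p (f ξ.1)) ∪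
      Set.range (fun μ : Idx κ => germOf p (fun _ => chi μ)) := Sum.elim_range _ _
  have hSB1 : Set.range (fun ξ : (C ∩ I : Set (Idx κ)) => germOf p (f ξ.1)) =
      (fun ξ : Idx κ => germOf p (f ξ)) '' (C ∩ I) := by
    ext t
    constructor
    · rintro ⟨ξ, rfl⟩
      exact ⟨ξ.1, ξ.2, rfl⟩
    · rintro ⟨ξ, hξ, rfl⟩
      exact ⟨⟨ξ, hξ⟩, rfl⟩
  have hconstmem : ∀ z ∈ Submodule.span ℚ
      (Set.range (fun μ : Idx κ => germOf p (fun _ => chi μ))),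
      ∃ w : Gk κ, z = germOf p (fun _ => w) := by
    intro z hz
    have hrc : Set.range (fun μ : Idx κ => germOf p (fun _ => chi μ)) =
        ⇑((germLM κ p).comp (constLM κ)) '' Set.range chi := by
      rw [← Set.range_comp]; rfl
    rw [hrc, ← Submodule.map_span] at hz
    obtain ⟨w, -, rfl⟩ := hz
    exact ⟨w, rfl⟩
  -- the claim: every germ of h x lies in a countably generated span
  have hclaim : ∀ x ∈ 𝔸, germOf p (h x) ∈ Submodule.span ℚ
      (((fun ξ : Idx κ => germOf p (f ξ)) '' (C ∩ I) ∪
        (fun w : Gk κ => germOf p (fun _ => w)) '' {w : Gk κ | ↑w.support ⊆ C}) ∪ {u₀}) := by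
    intro x hx
    obtain ⟨w, hw, z, hzmem, heq⟩ := Submodule.mem_sup.mp (hu₀all x hx)
    obtain ⟨c, rfl⟩ := Submodule.mem_span_singleton.mp hzmem
    rw [hrange, Submodule.span_union] at hw
    obtain ⟨w₁, hw₁, w₂, hw₂, rfl⟩ := Submodule.mem_sup.mp hw
    obtain ⟨wc, hwc⟩ := hconstmem w₂ hw₂
    have hw₁MC : w₁ ∈ MCsub κ p C := by
      have hle : Submodule.span ℚ
          (Set.range (fun ξ : (C ∩ I : Set (Idx κ)) => germOf p (f ξ.1))) ≤ MCsub κ p C := by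
        rw [Submodule.span_le]
        rintro _ ⟨ξ, rfl⟩
        exact hMCmem _ fun n => hfC ξ.1 ξ.2 n
      exact hle hw₁
    have hw₂MC : w₂ ∈ MCsub κ p C := by
      have h2 : w₂ = germOf p (h x) - c • u₀ - w₁ := by
        have h3 : w₂ = w₁ + w₂ + c • u₀ - c • u₀ - w₁ := by abel
        rw [heq] at h3
        exact h3
      rw [h2]
      exact Submodule.sub_mem _ (Submodule.sub_mem _ (hhMC x hx)
        (Submodule.smul_mem _ _ hu₀MC)) hw₁MC
    have hwcC : wc ∈ {w : Gk κ | ↑w.support ⊆ C} := by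
      obtain ⟨uu, huu, huueq⟩ := Submodule.mem_map.mp hw₂MC
      have hgermeq : germOf p uu = germOf p (fun _ => wc) := by
        rw [← hwc]; exact huueq
      have hev : {n | uu n = wc} ∈ p := Filter.Germ.coe_eq.mp hgermeq
      obtain ⟨n, hn⟩ := (hpinf _ hev).nonempty
      have hmem := Submodule.mem_pi.mp huu n (Set.mem_univ n)
      exact hn ▸ hmem
    have hw₁' : w₁ ∈ Submodule.span ℚ
        (((fun ξ : Idx κ => germOf p (f ξ)) '' (C ∩ I) ∪
          (fun w : Gk κ => germOf p (fun _ => w)) '' {w : Gk κ | ↑w.support ⊆ C}) ∪ {u₀}) := by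
      rw [hSB1] at hw₁
      exact Submodule.span_mono (fun t ht => Set.mem_union_left _ (Set.mem_union_left _ ht)) hw₁
    have hw₂' : w₂ ∈ Submodule.span ℚ
        (((fun ξ : Idx κ => germOf p (f ξ)) '' (C ∩ I) ∪
          (fun w : Gk κ => germOf p (fun _ => w)) '' {w : Gk κ | ↑w.support ⊆ C}) ∪ {u₀}) :=
      Submodule.subset_span (Set.mem_union_left _ (Set.mem_union_right _ ⟨wc, hwcC, hwc.symm⟩))
    have hu₀' : u₀ ∈ Submodule.span ℚ
        (((fun ξ : Idx κ => germOf p (f ξ)) '' (C ∩ I) ∪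
          (fun w : Gk κ => germOf p (fun _ => w)) '' {w : Gk κ | ↑w.support ⊆ C}) ∪ {u₀}) :=
      Submodule.subset_span (Set.mem_union_right _ rfl)
    rw [← heq]
    exact Submodule.add_mem _ (Submodule.add_mem _ hw₁' hw₂') (Submodule.smul_mem _ _ hu₀')
  -- countability
  have hQcc : ({w : Gk κ | ↑w.support ⊆ C}).Countable := by
    haveI := hCcount.to_subtype
    have hinj2 : Function.Injective (fun g : {w : Gk κ | ↑w.support ⊆ C} =>
        Finsupp.subtypeDomain (· ∈ C) g.1) := by
      intro a b hab
      apply Subtype.ext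
      ext μ
      by_cases hμ : μ ∈ C
      · have := DFunLike.congr_fun hab (⟨μ, hμ⟩ : {ν : Idx κ // ν ∈ C})
        simpa [Finsupp.subtypeDomain_apply] using this
      · have ha : a.1 μ = 0 := by
          by_contra hz
          exact hμ (a.2 (Finsupp.mem_support_iff.mpr hz))
        have hb : b.1 μ = 0 := by
          by_contra hz
          exact hμ (b.2 (Finsupp.mem_support_iff.mpr hz))
        rw [ha, hb]
    have : Countable ({w : Gk κ | ↑w.support ⊆ C}) := hinj2.countable
    exact Set.countable_coe_iff.mp this
  have hcnt : ((Submodule.span ℚ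
      (((fun ξ : Idx κ => germOf p (f ξ)) '' (C ∩ I) ∪
        (fun w : Gk κ => germOf p (fun _ => w)) '' {w : Gk κ | ↑w.support ⊆ C}) ∪ {u₀}) :
        Submodule ℚ (Filter.Germ (p : Filter ℕ) (Gk κ))) : Set (Filter.Germ (p : Filter ℕ) (Gk κ))).Countable := by
    refine aux_countable_span _ ?_
    exact (((hCcount.mono Set.inter_subset_left).image _).union (hQcc.image _)).union
      (Set.countable_singleton _)
  -- cardinality contradiction
  haveI := hcnt.to_subtype
  have hΦ : Function.Injective (fun x : 𝔸 =>
      (⟨germOf p (h x.1), hclaim x.1 x.2⟩ : ((Submodule.span ℚ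
      (((fun ξ : Idx κ => germOf p (f ξ)) '' (C ∩ I) ∪
        (fun w : Gk κ => germOf p (fun _ => w)) '' {w : Gk κ | ↑w.support ⊆ C}) ∪ {u₀}) :
        Submodule ℚ (Filter.Germ (p : Filter ℕ) (Gk κ))) : Set (Filter.Germ (p : Filter ℕ) (Gk κ))))) := by
    intro a b hab
    by_contra hne
    have hab' : germOf p (h a.1) = germOf p (h b.1) := congrArg Subtype.val hab
    exact hKey a.1 a.2 b.1 b.2 (fun hh => hne (Subtype.ext hh)) hab'
  have h1 := Cardinal.lift_mk_le'.mpr ⟨⟨_, hΦ⟩⟩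
  have h2 : Cardinal.mk ((Submodule.span ℚ
      (((fun ξ : Idx κ => germOf p (f ξ)) '' (C ∩ I) ∪
        (fun w : Gk κ => germOf p (fun _ => w)) '' {w : Gk κ | ↑w.support ⊆ C}) ∪ {u₀}) :
        Submodule ℚ (Filter.Germ (p : Filter ℕ) (Gk κ))) : Set (Filter.Germ (p : Filter ℕ) (Gk κ))) ≤ Cardinal.aleph0 :=
    Cardinal.mk_le_aleph0
  rw [h𝔸card] at h1
  have h3 := h1.trans (Cardinal.lift_le.mpr h2)
  rw [Cardinal.lift_continuum, Cardinal.lift_aleph0] at h3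
  exact absurd h3 Cardinal.aleph0_lt_continuum.not_ge

end
end

section
/- Fix a selective ultrafilter p on ω. Let 𝒢 be a finite subset of G^ω and suppose (𝒮, 𝒜, 𝒞, 𝓜, 𝓝) is adapted to 𝒢, where 𝒮 = ⟨𝓑, ν, ζ, K, A, k₀, k₁, l, T⟩ is a rational stack. Let ε be a positive real and D a finite subset of κ. Then there exist B ⊆ A cofinite in A and a family of positive reals (γ_n : n ∈ B) such that: for every n ∈ B, for every family (W_h : h ∈ 𝒞) of open arcs of 𝕋 of length ε, and for every ε-arc function ψ with supp ψ ⊆ D∖{ν_0, …, ν_{k₀−1}}, there exists a γ_n-arc function which is an n-solution of the arc equation (ψ, B, K·𝒞, K_n, W). -/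
open Filter Topology Set Pointwise

noncomputable section

section Statement8Aux
open Classical

lemma toCirc_eq_iff {x y : ℝ} : toCirc x = toCirc y ↔ ∃ m : ℤ, x = y + m := by
  constructor
  · intro h
    obtain ⟨m, hm⟩ := AddSubgroup.mem_zmultiples_iff.mp (QuotientAddGroup.eq.mp h)
    rw [zsmul_eq_mul, mul_one] at hm
    exact ⟨-m, by push_cast; linarith⟩
  · rintro ⟨m, rfl⟩
    have : toCirc ((m : ℝ)) = 0 := by
      have : ((m:ℝ) : AddCircle (1:ℝ)) = 0 := by
        rw [AddCircle.coe_eq_zero_iff]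
        exact ⟨m, by rw [zsmul_eq_mul, mul_one]⟩
      exact this
    show ((y + (m:ℝ) : ℝ) : AddCircle (1:ℝ)) = _
    rw [AddCircle.coe_add]
    rw [show ((m:ℝ) : AddCircle (1:ℝ)) = 0 from this]
    simp [toCirc]

lemma toCirc_add (x y : ℝ) : toCirc (x + y) = toCirc x + toCirc y :=
  AddCircle.coe_add 1 x y

lemma toCirc_sum {ι : Type*} (s : Finset ι) (f : ι → ℝ) :
    toCirc (∑ i ∈ s, f i) = ∑ i ∈ s, toCirc (f i) :=
  map_sum (QuotientAddGroup.mk' (AddSubgroup.zmultiples (1:ℝ))) f s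

lemma continuous_toCirc : Continuous toCirc := AddCircle.continuous_mk' 1

lemma univ_eq_arc : (Set.univ : Set Circ) = toCirc '' Set.Ioo 0 2 := by
  ext y
  simp only [Set.mem_univ, true_iff, Set.mem_image]
  induction y using QuotientAddGroup.induction_on with
  | H x =>
    refine ⟨Int.fract x + 1, ⟨by have := Int.fract_nonneg x; linarith, by have := Int.fract_lt_one x; linarith⟩, ?_⟩
    rw [show Int.fract x = x - ⌊x⌋ from rfl]
    exact toCirc_eq_iff.mpr ⟨1 - ⌊x⌋, by push_cast; ring⟩

lemma isArc_univ : IsArc (Set.univ : Set Circ) := ⟨0, 2, univ_eq_arc⟩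

lemma isArc_arcOf (a γ : ℝ) : IsArc (arcOf a γ) := ⟨a, a + γ, rfl⟩

lemma arcOf_translate (a γ : ℝ) (k : ℤ) :
    toCirc '' Set.Ioo (a + k) (a + k + γ) = arcOf a γ := by
  unfold arcOf
  ext y
  simp only [Set.mem_image]
  constructor
  · rintro ⟨w, hw, rfl⟩
    exact ⟨w - k, ⟨by linarith [hw.1], by linarith [hw.2]⟩,
      toCirc_eq_iff.mpr ⟨-k, by push_cast; ring⟩⟩
  · rintro ⟨w, hw, rfl⟩
    exact ⟨w + k, ⟨by linarith [hw.1], by linarith [hw.2]⟩,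
      toCirc_eq_iff.mpr ⟨k, by push_cast; ring⟩⟩

lemma smulArc_int_subset (z : ℤ) (Sr : Set ℝ) :
    smulArc (z : ℚ) (toCirc '' Sr) ⊆ toCirc '' ((fun r => (z : ℝ) * r) '' Sr) := by
  rintro y ⟨x, hx, rfl⟩
  obtain ⟨w, hw, hwx⟩ := hx
  obtain ⟨m, hm⟩ := toCirc_eq_iff.mp hwx.symm
  refine ⟨(z : ℝ) * w, ⟨w, hw, rfl⟩, ?_⟩
  rw [toCirc_eq_iff]
  subst hm
  exact ⟨-(z * m), by push_cast; ring⟩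

lemma mem_finsetSum_sets {ι : Type*} (s : Finset ι) (f : ι → Set Circ) (y : Circ)
    (hy : y ∈ ∑ i ∈ s, f i) :
    ∃ w : ι → Circ, (∀ i ∈ s, w i ∈ f i) ∧ y = ∑ i ∈ s, w i := by
  classical
  induction s using Finset.cons_induction generalizing y with
  | empty =>
    refine ⟨0, by simp, ?_⟩
    simpa using hy
  | cons a s ha ih =>
    rw [Finset.sum_cons] at hy
    obtain ⟨u, hu, v, hv, huv⟩ := Set.mem_add.mp hy
    obtain ⟨w, hw, rfl⟩ := ih v hv
    refine ⟨Function.update w a u, ?_, ?_⟩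
    · intro i hi
      rcases Finset.mem_cons.mp hi with rfl | hi
      · simpa using hu
      · have hne : i ≠ a := fun hia => ha (by rwa [hia] at hi)
        rw [Function.update_of_ne hne]
        exact hw i hi
    · rw [Finset.sum_cons, Function.update_self]
      have heq : ∑ i ∈ s, Function.update w a u i = ∑ i ∈ s, w i := by
        apply Finset.sum_congr rfl
        intro i hi
        have hne : i ≠ a := fun hia => ha (by rwa [hia] at hi)
        simp [Function.update_of_ne hne]
      rw [heq]
      exact huv.symm

end Statement8Aux


section FejerDensity
open Complex Classical

/-- `e(θ) = exp(2πiθ)`. -/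
noncomputable def ee (θ : ℝ) : ℂ := Complex.exp ((2 * Real.pi * θ : ℝ) * Complex.I)

lemma ee_add (a b : ℝ) : ee (a + b) = ee a * ee b := by
  rw [ee, ee, ee, ← Complex.exp_add]
  congr 1
  push_cast
  ring

lemma ee_zero : ee 0 = 1 := by simp [ee]

lemma ee_norm (θ : ℝ) : ‖ee θ‖ = 1 := Complex.norm_exp_ofReal_mul_I _

lemma ee_sum {ι : Type*} (s : Finset ι) (f : ι → ℝ) :
    ee (∑ i ∈ s, f i) = ∏ i ∈ s, ee (f i) := by
  have h : ((2 * Real.pi * (∑ i ∈ s, f i) : ℝ) : ℂ) * Complex.I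
      = ∑ i ∈ s, ((2 * Real.pi * f i : ℝ) : ℂ) * Complex.I := by
    push_cast
    rw [Finset.mul_sum, Finset.sum_mul]
  rw [ee, h, Complex.exp_sum]
  rfl

lemma ee_conj (θ : ℝ) : (starRingEnd ℂ) (ee θ) = ee (-θ) := by
  rw [ee, ee, ← Complex.exp_conj]
  congr 1
  simp only [map_mul, Complex.conj_I, Complex.conj_ofReal]
  push_cast
  ring

lemma ee_pow (j : ℕ) (θ : ℝ) : ee ((j : ℝ) * θ) = ee θ ^ j := by
  induction j with
  | zero => simpa using ee_zero
  | succ n ih =>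
    rw [pow_succ, ← ih, ← ee_add]
    congr 1
    push_cast
    ring

lemma continuous_ee : Continuous ee := by
  apply Complex.continuous_exp.comp
  exact (Complex.continuous_ofReal.comp (by continuity)).mul continuous_const

/-- Unnormalized Fejér-type kernel. -/
noncomputable def Fej (N : ℕ) (θ : ℝ) : ℝ :=
  Complex.normSq (∑ j ∈ Finset.range N, ee ((j : ℝ) * θ))

lemma Fej_nonneg (N : ℕ) (θ : ℝ) : 0 ≤ Fej N θ := Complex.normSq_nonneg _

lemma continuous_Fej (N : ℕ) (b c : ℝ) : Continuous (fun u : ℝ => Fej N (b * u - c)) := by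
  apply Complex.continuous_normSq.comp
  apply continuous_finset_sum
  intro j _
  exact continuous_ee.comp (by continuity)

lemma Fej_coe (N : ℕ) (θ : ℝ) :
    ((Fej N θ : ℝ) : ℂ) = ∑ j ∈ Finset.range N, ∑ j' ∈ Finset.range N,
      ee (((j : ℝ) - (j' : ℝ)) * θ) := by
  rw [Fej, ← Complex.mul_conj, map_sum, Finset.sum_mul_sum]
  apply Finset.sum_congr rfl
  intro j _
  apply Finset.sum_congr rfl
  intro j' _
  rw [ee_conj, ← ee_add]
  congr 1
  ring

/-- norm of `e(θ) - 1`. -/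
lemma norm_ee_sub_one (θ : ℝ) : ‖ee θ - 1‖ = 2 * |Real.sin (Real.pi * θ)| := by
  have h : ee θ - 1
      = Complex.ofReal (Real.cos (2 * Real.pi * θ) - 1)
        + Complex.ofReal (Real.sin (2 * Real.pi * θ)) * Complex.I := by
    rw [ee, Complex.exp_mul_I, ← Complex.ofReal_cos, ← Complex.ofReal_sin]
    push_cast
    ring
  rw [h]
  rw [show Complex.ofReal (Real.cos (2 * Real.pi * θ) - 1)
        + Complex.ofReal (Real.sin (2 * Real.pi * θ)) * Complex.I
      = Complex.mk (Real.cos (2 * Real.pi * θ) - 1) (Real.sin (2 * Real.pi * θ)) by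
    rw [Complex.mk_eq_add_mul_I]]
  rw [Complex.norm_def, Complex.normSq_mk]
  have h2 : (Real.cos (2 * Real.pi * θ) - 1) * (Real.cos (2 * Real.pi * θ) - 1)
      + Real.sin (2 * Real.pi * θ) * Real.sin (2 * Real.pi * θ)
      = 4 * Real.sin (Real.pi * θ) ^ 2 := by
    have hs : Real.sin (Real.pi * θ) ^ 2 = 1 / 2 - Real.cos (2 * Real.pi * θ) / 2 := by
      have := Real.sin_sq_eq_half_sub (Real.pi * θ)
      rw [show 2 * (Real.pi * θ) = 2 * Real.pi * θ by ring] at this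
      exact this
    have hc := Real.sin_sq_add_cos_sq (2 * Real.pi * θ)
    nlinarith [hs, hc]
  rw [h2]
  rw [show 4 * Real.sin (Real.pi * θ) ^ 2 = (2 * |Real.sin (Real.pi * θ)|) ^ 2 by
    rw [mul_pow, _root_.sq_abs]; ring]
  exact Real.sqrt_sq (by positivity)

/-- Key upper bound for the Fejér kernel away from the integers. -/
lemma Fej_le (N : ℕ) (θ δ : ℝ) (hδ : 0 < δ) (hbad : ∀ k : ℤ, δ ≤ |θ - k|) :
    Fej N θ ≤ 1 / (4 * δ ^ 2) := by
  -- the distance of θ to ℤ is at least δ and at most 1/2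
  set τ : ℝ := θ - round θ with hτ
  have hτ2 : |τ| ≤ 1 / 2 := abs_sub_round θ
  have hτδ : δ ≤ |τ| := hbad (round θ)
  -- |sin (π θ)| ≥ 2 δ
  have hsin : 2 * δ ≤ |Real.sin (Real.pi * θ)| := by
    have hper : |Real.sin (Real.pi * θ)| = |Real.sin (Real.pi * τ)| := by
      have : Real.pi * θ = Real.pi * τ + (round θ : ℤ) * Real.pi := by ring
      rw [this, Real.sin_add_int_mul_pi]
      have habs1 : |((-1:ℝ)) ^ (round θ)| = 1 := by
        rcases Int.even_or_odd (round θ) with he | ho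
        · rw [he.neg_one_zpow]; simp
        · rw [ho.neg_one_zpow]; simp
      rw [abs_mul, habs1, one_mul]
    rw [hper]
    have habs : Real.sin (Real.pi * |τ|) ≥ 2 * |τ| := by
      have h1 : (0:ℝ) ≤ Real.pi * |τ| := by positivity
      have h2 : Real.pi * |τ| ≤ Real.pi / 2 := by
        have hπ := Real.pi_pos
        nlinarith [hτ2]
      have := Real.mul_le_sin (x := Real.pi * |τ|) h1 h2
      have hπ := Real.pi_pos
      calc 2 * |τ| = 2 / Real.pi * (Real.pi * |τ|) := by field_simp
      _ ≤ Real.sin (Real.pi * |τ|) := this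
    have hle : 0 ≤ Real.sin (Real.pi * |τ|) :=
      le_trans (by positivity) habs
    have : |Real.sin (Real.pi * τ)| = Real.sin (Real.pi * |τ|) := by
      rcases abs_cases τ with ⟨h1, _⟩ | ⟨h1, _⟩
      · rw [h1] at hle ⊢
        exact _root_.abs_of_nonneg hle
      · rw [h1] at hle ⊢
        rw [mul_neg, Real.sin_neg] at hle ⊢
        exact _root_.abs_of_nonpos (by linarith)
    rw [this]
    calc 2 * δ ≤ 2 * |τ| := by linarith
    _ ≤ Real.sin (Real.pi * |τ|) := habs
  -- hence e(θ) ≠ 1 and the geometric sum is controlled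
  have hne : ee θ ≠ 1 := by
    intro h
    have := norm_ee_sub_one θ
    rw [h, sub_self, norm_zero] at this
    nlinarith [hsin, hδ]
  have hgeom : ∑ j ∈ Finset.range N, ee ((j : ℝ) * θ) = (ee θ ^ N - 1) / (ee θ - 1) := by
    rw [← geom_sum_eq hne]
    apply Finset.sum_congr rfl
    intro j _
    exact ee_pow j θ
  have hnorm : ‖∑ j ∈ Finset.range N, ee ((j : ℝ) * θ)‖ ≤ 1 / (2 * δ) := by
    rw [hgeom, norm_div]
    have h1 : ‖ee θ ^ N - 1‖ ≤ 2 := by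
      calc ‖ee θ ^ N - 1‖ ≤ ‖ee θ ^ N‖ + ‖(1:ℂ)‖ := norm_sub_le _ _
      _ = 2 := by rw [norm_pow, ee_norm, one_pow, norm_one]; norm_num
    have h2 : 4 * δ ≤ ‖ee θ - 1‖ := by
      rw [norm_ee_sub_one]
      linarith
    have hpos : (0:ℝ) < ‖ee θ - 1‖ := lt_of_lt_of_le (by positivity) h2
    rw [div_le_div_iff₀ hpos (by positivity)]
    calc ‖ee θ ^ N - 1‖ * (2 * δ) ≤ 2 * (2 * δ) :=
          mul_le_mul_of_nonneg_right h1 (by linarith)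
    _ ≤ 1 * ‖ee θ - 1‖ := by rw [one_mul]; linarith
  rw [Fej]
  rw [← Complex.sq_norm]
  calc ‖∑ j ∈ Finset.range N, ee ((j : ℝ) * θ)‖ ^ 2 ≤ (1 / (2 * δ)) ^ 2 := by
        apply sq_le_sq'
        · calc -(1 / (2*δ)) ≤ 0 := by
                have : (0:ℝ) ≤ 1/(2*δ) := by positivity
                linarith
          _ ≤ _ := norm_nonneg _
        · exact hnorm
  _ = 1 / (4 * δ ^ 2) := by field_simp; ring

/-- The basic oscillatory-integral bound. -/
lemma integral_ee_bound (U : ℝ) (a : ℤ) (ha : a ≠ 0) (c : ℝ) :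
    ‖∫ u in (0:ℝ)..U, ee ((a : ℝ) * u - c)‖ ≤ 1 := by
  set cc : ℂ := ((2 * Real.pi * (a:ℝ) : ℝ) : ℂ) * Complex.I with hcc
  have hccne : cc ≠ 0 := by
    apply mul_ne_zero _ Complex.I_ne_zero
    rw [Complex.ofReal_ne_zero]
    have := Real.pi_ne_zero
    have : (a:ℝ) ≠ 0 := Int.cast_ne_zero.mpr ha
    positivity
  have hint : ∀ u : ℝ, ee ((a : ℝ) * u - c) = ee (-c) * Complex.exp (cc * (u:ℂ)) := by
    intro u
    rw [show ((a:ℝ) * u - c) = -c + (a:ℝ) * u by ring, ee_add]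
    congr 1
    rw [ee, hcc]
    congr 1
    push_cast
    ring
  rw [intervalIntegral.integral_congr (g := fun u => ee (-c) * Complex.exp (cc * (u:ℂ)))
    (fun u _ => hint u)]
  rw [intervalIntegral.integral_const_mul]
  rw [integral_exp_mul_complex hccne]
  rw [norm_mul, ee_norm, one_mul, norm_div]
  have hnum : ‖Complex.exp (cc * (U:ℂ)) - Complex.exp (cc * ((0:ℝ):ℂ))‖ ≤ 2 := by
    have h1 : ‖Complex.exp (cc * (U:ℂ))‖ = 1 := by
      rw [show cc * (U:ℂ) = ((2 * Real.pi * (a:ℝ) * U : ℝ) : ℂ) * Complex.I by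
        rw [hcc]; push_cast; ring]
      exact Complex.norm_exp_ofReal_mul_I _
    have h2 : ‖Complex.exp (cc * ((0:ℝ):ℂ))‖ = 1 := by
      norm_num
    calc ‖Complex.exp (cc * (U:ℂ)) - Complex.exp (cc * ((0:ℝ):ℂ))‖
        ≤ ‖Complex.exp (cc * (U:ℂ))‖ + ‖Complex.exp (cc * ((0:ℝ):ℂ))‖ := norm_sub_le _ _
    _ = 2 := by rw [h1, h2]; norm_num
  have hden : (2:ℝ) ≤ ‖cc‖ := by
    rw [hcc, norm_mul, Complex.norm_I, mul_one, Complex.norm_real, Real.norm_eq_abs]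
    rw [abs_mul]
    have h1 : |2 * Real.pi| = 2 * Real.pi := abs_of_pos (by positivity)
    have h2 : (1:ℝ) ≤ |(a:ℝ)| := by
      rw [← Int.cast_abs]
      exact_mod_cast Int.one_le_abs ha
    have hπ := Real.pi_gt_three
    nlinarith
  rw [div_le_one (by linarith)]
  linarith

end FejerDensity


section KeyIntegral
open Complex Classical

lemma key_integral {α : Type*} [DecidableEq α] (N : ℕ) (x : α → ℤ) (t : α → ℝ)
    (U : ℝ) (s : Finset α)
    (hrel : ∀ q : α → ℤ, (∀ a, |q a| ≤ (N:ℤ)) → (∀ a, a ∉ s → q a = 0) →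
      (∑ a ∈ s, q a * x a) = 0 → ∀ a, q a = 0) :
    |(∫ u in (0:ℝ)..U, ∏ a ∈ s, Fej N ((x a : ℝ) * u - t a)) - (N:ℝ)^s.card * U|
      ≤ (N:ℝ)^(2 * s.card) := by
  classical
  set P : Finset (ℕ × ℕ) := Finset.range N ×ˢ Finset.range N with hP
  set T := s.pi (fun _ => P) with hT
  set dz : ℕ × ℕ → ℤ := fun c => (c.1 : ℤ) - (c.2 : ℤ) with hdz
  set Ap : (∀ a ∈ s, ℕ × ℕ) → ℤ := fun p => ∑ a ∈ s.attach, dz (p a.1 a.2) * x a.1 with hAp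
  set Cp : (∀ a ∈ s, ℕ × ℕ) → ℝ :=
    fun p => ∑ a ∈ s.attach, (dz (p a.1 a.2) : ℝ) * t a.1 with hCp
  -- pointwise expansion of the product of kernels
  have hexp : ∀ u : ℝ, ((∏ a ∈ s, Fej N ((x a : ℝ) * u - t a) : ℝ) : ℂ)
      = ∑ p ∈ T, ee ((Ap p : ℝ) * u - Cp p) := by
    intro u
    rw [Complex.ofReal_prod]
    have h1 : ∀ a ∈ s, ((Fej N ((x a : ℝ) * u - t a) : ℝ) : ℂ)
        = ∑ c ∈ P, ee ((dz c : ℝ) * ((x a : ℝ) * u - t a)) := by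
      intro a _
      rw [Fej_coe, hP, Finset.sum_product]
      apply Finset.sum_congr rfl
      intro j _
      apply Finset.sum_congr rfl
      intro j' _
      congr 2
      rw [hdz]
      push_cast
      ring
    rw [Finset.prod_congr rfl h1, Finset.prod_sum]
    apply Finset.sum_congr rfl
    intro p hp
    rw [← ee_sum]
    congr 1
    have h2 : ∀ a ∈ s.attach, (dz (p a.1 a.2) : ℝ) * ((x a.1 : ℝ) * u - t a.1)
        = ((dz (p a.1 a.2) : ℝ) * (x a.1 : ℝ)) * u - (dz (p a.1 a.2) : ℝ) * t a.1 := by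
      intros; ring
    rw [Finset.sum_congr rfl h2, Finset.sum_sub_distrib, ← Finset.sum_mul]
    rw [hAp, hCp]
    push_cast
    ring
  -- diagonality of relation-free zero-frequency terms
  have hdiag : ∀ p ∈ T, Ap p = 0 → ∀ a (ha : a ∈ s), dz (p a ha) = 0 := by
    intro p hp hA0 a ha
    have hmemP : ∀ b (hb : b ∈ s), p b hb ∈ P := fun b hb => Finset.mem_pi.mp hp b hb
    have h1 : ∀ b, |(fun b => if hb : b ∈ s then dz (p b hb) else 0) b| ≤ (N:ℤ) := by
      intro b
      by_cases hb : b ∈ s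
      · simp only [dif_pos hb]
        have hc := hmemP b hb
        rw [hP, Finset.mem_product] at hc
        have hc1 : (p b hb).1 < N := Finset.mem_range.mp hc.1
        have hc2 : (p b hb).2 < N := Finset.mem_range.mp hc.2
        simp only [hdz]
        have hc1' : ((p b hb).1 : ℤ) < N := by exact_mod_cast hc1
        have hc2' : ((p b hb).2 : ℤ) < N := by exact_mod_cast hc2
        have hn1 : (0:ℤ) ≤ ((p b hb).1 : ℤ) := Int.ofNat_nonneg _
        have hn2 : (0:ℤ) ≤ ((p b hb).2 : ℤ) := Int.ofNat_nonneg _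
        rw [abs_le]
        omega
      · simp only [dif_neg hb]
        simp
    have h2 : ∀ b, b ∉ s → (fun b => if hb : b ∈ s then dz (p b hb) else 0) b = 0 := by
      intro b hb
      simp only [dif_neg hb]
    have h3 : ∑ b ∈ s, (fun b => if hb : b ∈ s then dz (p b hb) else 0) b * x b = Ap p := by
      rw [hAp, ← Finset.sum_attach s
        (fun b => (fun b => if hb : b ∈ s then dz (p b hb) else 0) b * x b)]
      apply Finset.sum_congr rfl
      intro b _
      simp only [dif_pos b.2]
    have hz := hrel (fun b => if hb : b ∈ s then dz (p b hb) else 0) h1 h2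
      (by rw [h3]; exact hA0) a
    simp only [dif_pos ha] at hz
    exact hz
  -- the diagonal count
  set T0 := T.filter (fun p => Ap p = 0) with hT0
  have hcard0 : T0.card = N ^ s.card := by
    rw [show N ^ s.card = (s.pi (fun _ => Finset.range N)).card by
      rw [Finset.card_pi, Finset.prod_const, Finset.card_range]]
    refine Finset.card_bij' (fun p _ => fun a ha => (p a ha).1)
      (fun f _ => fun a ha => ((f a ha), (f a ha))) ?hi ?hj ?hleft ?hright
    · intro p hp
      rw [Finset.mem_pi]
      intro a ha
      have := Finset.mem_pi.mp (Finset.mem_filter.mp hp).1 a ha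
      rw [hP, Finset.mem_product] at this
      exact this.1
    · intro f hf
      rw [hT0, Finset.mem_filter]
      constructor
      · rw [hT, Finset.mem_pi]
        intro a ha
        rw [hP, Finset.mem_product]
        exact ⟨Finset.mem_pi.mp hf a ha, Finset.mem_pi.mp hf a ha⟩
      · rw [hAp]
        apply Finset.sum_eq_zero
        intro a _
        simp [hdz]
    · intro p hp
      funext a ha
      have h0 := hdiag p (Finset.mem_filter.mp hp).1 (Finset.mem_filter.mp hp).2 a ha
      simp only [hdz] at h0
      have h1 : (p a ha).1 = (p a ha).2 := by omega
      show ((p a ha).1, (p a ha).1) = p a ha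
      exact Prod.ext rfl (by rw [h1])
    · intro f hf
      rfl
  -- the complex integral computation
  have hcont : ∀ p : (∀ a ∈ s, ℕ × ℕ), Continuous (fun u : ℝ => ee ((Ap p : ℝ) * u - Cp p)) :=
    fun p => continuous_ee.comp ((continuous_const.mul continuous_id).sub continuous_const)
  have hint : (∫ u in (0:ℝ)..U, ((∏ a ∈ s, Fej N ((x a : ℝ) * u - t a) : ℝ) : ℂ))
      = ∑ p ∈ T, ∫ u in (0:ℝ)..U, ee ((Ap p : ℝ) * u - Cp p) := by
    rw [intervalIntegral.integral_congr (g := fun u => ∑ p ∈ T, ee ((Ap p : ℝ) * u - Cp p))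
      (fun u _ => hexp u)]
    exact intervalIntegral.integral_finset_sum
      (fun p _ => ((hcont p).intervalIntegrable _ _))
  have hofreal : (∫ u in (0:ℝ)..U, ((∏ a ∈ s, Fej N ((x a : ℝ) * u - t a) : ℝ) : ℂ))
      = Complex.ofReal (∫ u in (0:ℝ)..U, ∏ a ∈ s, Fej N ((x a : ℝ) * u - t a)) :=
    intervalIntegral.integral_ofReal
  -- value of the diagonal terms
  have hdiagval : ∀ p ∈ T0, (∫ u in (0:ℝ)..U, ee ((Ap p : ℝ) * u - Cp p)) = (U : ℂ) := by
    intro p hp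
    have hp0 : Ap p = 0 := (Finset.mem_filter.mp hp).2
    have hCp0 : Cp p = 0 := by
      rw [hCp]
      apply Finset.sum_eq_zero
      intro a _
      have := hdiag p (Finset.mem_filter.mp hp).1 hp0 a.1 a.2
      rw [this]
      simp
    have : ∀ u ∈ Set.uIcc (0:ℝ) U, ee ((Ap p : ℝ) * u - Cp p) = 1 := by
      intro u _
      rw [hp0, hCp0]
      simpa using ee_zero
    rw [intervalIntegral.integral_congr this, intervalIntegral.integral_const]
    simp
  -- the off-diagonal bound
  have hoff : ‖∑ p ∈ T.filter (fun p => ¬ Ap p = 0),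
      ∫ u in (0:ℝ)..U, ee ((Ap p : ℝ) * u - Cp p)‖ ≤ (N:ℝ)^(2 * s.card) := by
    calc ‖∑ p ∈ T.filter (fun p => ¬ Ap p = 0),
        ∫ u in (0:ℝ)..U, ee ((Ap p : ℝ) * u - Cp p)‖
        ≤ ∑ p ∈ T.filter (fun p => ¬ Ap p = 0),
          ‖∫ u in (0:ℝ)..U, ee ((Ap p : ℝ) * u - Cp p)‖ := norm_sum_le _ _
    _ ≤ ∑ p ∈ T.filter (fun p => ¬ Ap p = 0), 1 := by
        apply Finset.sum_le_sum
        intro p hp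
        exact integral_ee_bound U (Ap p) (Finset.mem_filter.mp hp).2 (Cp p)
    _ = ((T.filter (fun p => ¬ Ap p = 0)).card : ℝ) := by rw [Finset.sum_const]; simp
    _ ≤ (T.card : ℝ) := by
        have := Finset.card_filter_le T (fun p => ¬ Ap p = 0)
        exact_mod_cast this
    _ ≤ (N:ℝ)^(2 * s.card) := by
        have hTc : T.card = (N * N) ^ s.card := by
          rw [hT, Finset.card_pi, Finset.prod_const]
          congr 1
          rw [hP, Finset.card_product, Finset.card_range]
        rw [hTc]
        rw [show 2 * s.card = s.card * 2 by ring, pow_mul]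
        apply le_of_eq
        push_cast
        ring
  -- put everything together
  have hsplit : ∑ p ∈ T, (∫ u in (0:ℝ)..U, ee ((Ap p : ℝ) * u - Cp p))
      = (N ^ s.card : ℕ) • (U : ℂ) + ∑ p ∈ T.filter (fun p => ¬ Ap p = 0),
          ∫ u in (0:ℝ)..U, ee ((Ap p : ℝ) * u - Cp p) := by
    rw [← Finset.sum_filter_add_sum_filter_not T (fun p => Ap p = 0)]
    congr 1
    rw [Finset.sum_congr rfl hdiagval, Finset.sum_const, hcard0]
  have hfinal : Complex.ofReal ((∫ u in (0:ℝ)..U, ∏ a ∈ s, Fej N ((x a : ℝ) * u - t a))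
      - (N:ℝ)^s.card * U) = ∑ p ∈ T.filter (fun p => ¬ Ap p = 0),
          ∫ u in (0:ℝ)..U, ee ((Ap p : ℝ) * u - Cp p) := by
    rw [Complex.ofReal_sub, ← hofreal, hint, hsplit]
    push_cast
    ring
  calc |(∫ u in (0:ℝ)..U, ∏ a ∈ s, Fej N ((x a : ℝ) * u - t a)) - (N:ℝ)^s.card * U|
      = ‖Complex.ofReal ((∫ u in (0:ℝ)..U, ∏ a ∈ s, Fej N ((x a : ℝ) * u - t a))
          - (N:ℝ)^s.card * U)‖ := by
        rw [Complex.norm_real, Real.norm_eq_abs]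
  _ = ‖∑ p ∈ T.filter (fun p => ¬ Ap p = 0),
        ∫ u in (0:ℝ)..U, ee ((Ap p : ℝ) * u - Cp p)‖ := by rw [hfinal]
  _ ≤ (N:ℝ)^(2 * s.card) := hoff

end KeyIntegral


section Density

theorem density_lemma {α : Type*} [DecidableEq α] (s : Finset α) (x : α → ℤ) (t : α → ℝ)
    (δ : ℝ) (hδ : 0 < δ) (N : ℕ) (hN1 : 1 ≤ N) (hNδ : (s.card : ℝ) ≤ (N:ℝ) * δ^2)
    (hrel : ∀ q : α → ℤ, (∀ a, |q a| ≤ (N:ℤ)) → (∀ a, a ∉ s → q a = 0) →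
      (∑ a ∈ s, q a * x a) = 0 → ∀ a, q a = 0) :
    ∃ u : ℝ, ∀ a ∈ s, ∃ k : ℤ, |(x a : ℝ) * u - t a - k| ≤ δ := by
  classical
  by_contra hcon
  push_neg at hcon
  have hsne : s.Nonempty := by
    obtain ⟨a0, ha0, _⟩ := hcon 0
    exact ⟨a0, ha0⟩
  obtain ⟨m', hm'⟩ : ∃ m', s.card = m' + 1 :=
    ⟨s.card - 1, by have := Finset.card_pos.mpr hsne; omega⟩
  set ν : ℝ := (N:ℝ) with hν
  have hν1 : (1:ℝ) ≤ ν := by rw [hν]; exact_mod_cast hN1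
  have hν0 : (0:ℝ) < ν := lt_of_lt_of_le one_pos hν1
  set U : ℝ := 2 * ν^(m' + 2) with hU
  have hUpos : 0 < U := by positivity
  set B : ℝ := 1/(4*δ^2) with hB
  have hBpos : 0 < B := by positivity
  -- the full product and the erased products
  set Pf : ℝ → ℝ := fun u => ∏ a ∈ s, Fej N ((x a : ℝ)*u - t a) with hPf
  have hPfc : Continuous Pf :=
    continuous_finset_prod s (fun a _ => continuous_Fej N (x a : ℝ) (t a))
  set Pe : α → ℝ → ℝ := fun a u => ∏ b ∈ s.erase a, Fej N ((x b : ℝ)*u - t b) with hPe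
  have hPec : ∀ a, Continuous (Pe a) :=
    fun a => continuous_finset_prod _ (fun b _ => continuous_Fej N (x b : ℝ) (t b))
  -- lower bound for the full integral
  have hbig := key_integral N x t U s hrel
  rw [hm'] at hbig
  have hlow : ν^(m'+1) * U - ν^(2*(m'+1)) ≤ ∫ u in (0:ℝ)..U, Pf u := by
    have := abs_le.mp hbig
    have h := this.1
    rw [hPf]
    linarith [h]
  -- upper bounds for the erased integrals
  have herase : ∀ a ∈ s, (∫ u in (0:ℝ)..U, Pe a u) ≤ ν^(m') * U + ν^(2*m') := by
    intro a ha
    have hrel' : ∀ q : α → ℤ, (∀ b, |q b| ≤ (N:ℤ)) → (∀ b, b ∉ s.erase a → q b = 0) →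
        (∑ b ∈ s.erase a, q b * x b) = 0 → ∀ b, q b = 0 := by
      intro q h1 h2 h3
      apply hrel q h1 (fun b hb => h2 b (fun hbe => hb (Finset.mem_of_mem_erase hbe)))
      rw [← Finset.sum_subset (Finset.erase_subset a s)
        (fun b _ hbe => by rw [h2 b hbe, zero_mul])]
      exact h3
    have hb := key_integral N x t U (s.erase a) hrel'
    rw [Finset.card_erase_of_mem ha, hm'] at hb
    have := abs_le.mp hb
    have h := this.2
    rw [hPe]
    have hsimp : (m' + 1 - 1) = m' := by omega
    rw [hsimp] at h
    linarith [h]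
  -- pointwise domination on [0, U]
  have hpoint : ∀ u ∈ Set.Icc (0:ℝ) U, Pf u ≤ ∑ a ∈ s, B * Pe a u := by
    intro u _
    obtain ⟨a0, ha0, hbad⟩ := hcon u
    have h1 : Pf u = Fej N ((x a0:ℝ)*u - t a0) * Pe a0 u :=
      (Finset.mul_prod_erase s _ ha0).symm
    have h2 : Fej N ((x a0:ℝ)*u - t a0) ≤ B :=
      Fej_le N _ δ hδ (fun k => le_of_lt (hbad k))
    have h3 : (0:ℝ) ≤ Pe a0 u :=
      Finset.prod_nonneg (fun b _ => Fej_nonneg N _)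
    have h4 : Pf u ≤ B * Pe a0 u := by
      rw [h1]
      exact mul_le_mul_of_nonneg_right h2 h3
    have h5 : B * Pe a0 u ≤ ∑ a ∈ s, B * Pe a u := by
      apply Finset.single_le_sum (f := fun a => B * Pe a u) ?_ ha0
      intro a _
      exact mul_nonneg (le_of_lt hBpos) (Finset.prod_nonneg (fun b _ => Fej_nonneg N _))
    linarith
  -- integrate the pointwise bound
  have hintineq : (∫ u in (0:ℝ)..U, Pf u) ≤ ∫ u in (0:ℝ)..U, ∑ a ∈ s, B * Pe a u := by
    apply intervalIntegral.integral_mono_on (le_of_lt hUpos)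
      (hPfc.intervalIntegrable _ _)
      ((continuous_finset_sum s (fun a _ => continuous_const.mul (hPec a))).intervalIntegrable _ _)
      hpoint
  have hsum : (∫ u in (0:ℝ)..U, ∑ a ∈ s, B * Pe a u)
      = ∑ a ∈ s, B * ∫ u in (0:ℝ)..U, Pe a u := by
    rw [intervalIntegral.integral_finset_sum
      (fun a _ => ((show Continuous (fun u => B * Pe a u) from continuous_const.mul (hPec a)).intervalIntegrable _ _))]
    apply Finset.sum_congr rfl
    intro a _
    exact intervalIntegral.integral_const_mul _ _
  have hRHS : ∑ a ∈ s, B * ∫ u in (0:ℝ)..U, Pe a u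
      ≤ (m' + 1 : ℝ) * B * (ν^(m') * U + ν^(2*m')) := by
    calc ∑ a ∈ s, B * ∫ u in (0:ℝ)..U, Pe a u
        ≤ ∑ a ∈ s, B * (ν^(m') * U + ν^(2*m')) := by
          apply Finset.sum_le_sum
          intro a ha
          exact mul_le_mul_of_nonneg_left (herase a ha) (le_of_lt hBpos)
    _ = (m' + 1 : ℝ) * B * (ν^(m') * U + ν^(2*m')) := by
        rw [Finset.sum_const, hm']
        push_cast
        ring
  -- the numeric contradiction
  have hmB : (m' + 1 : ℝ) * B ≤ ν / 4 := by
    have hcard : ((m':ℝ) + 1) ≤ ν * δ^2 := by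
      have hcc : ((s.card:ℝ)) = (m':ℝ) + 1 := by rw [hm']; push_cast; ring
      linarith [hNδ, hcc]
    have hB4 : B * (4*δ^2) = 1 := by rw [hB]; field_simp
    have h4 : (0:ℝ) < 4*δ^2 := by positivity
    rw [← mul_le_mul_iff_of_pos_right h4]
    calc (↑m'+1)*B*(4*δ^2) = (↑m'+1) * (B * (4*δ^2)) := by ring
    _ = (↑m'+1) := by rw [hB4]; ring
    _ ≤ ν * δ^2 := hcard
    _ = ν/4*(4*δ^2) := by ring
  have hterm : (0:ℝ) ≤ ν^(m') * U + ν^(2*m') := by positivity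
  have hchain : ν^(m'+1) * U - ν^(2*(m'+1)) ≤ (ν/4) * (ν^(m') * U + ν^(2*m')) := by
    calc ν^(m'+1) * U - ν^(2*(m'+1)) ≤ ∫ u in (0:ℝ)..U, Pf u := hlow
    _ ≤ ∑ a ∈ s, B * ∫ u in (0:ℝ)..U, Pe a u := by rw [← hsum]; exact hintineq
    _ ≤ (m' + 1 : ℝ) * B * (ν^(m') * U + ν^(2*m')) := hRHS
    _ ≤ (ν/4) * (ν^(m') * U + ν^(2*m')) := mul_le_mul_of_nonneg_right hmB hterm
  -- expand powers and contradict
  have e1 : ν^(m'+1) * U = 2 * ν^(2*m'+3) := by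
    rw [hU, show (2*m'+3) = (m'+1) + (m'+2) by omega, pow_add]
    ring
  have e2 : ν^(m') * U = 2 * ν^(2*m'+2) := by
    rw [hU, show (2*m'+2) = m' + (m'+2) by omega, pow_add]
    ring
  have e3 : (ν/4) * (2 * ν^(2*m'+2) + ν^(2*m'))
      = (1/2) * (ν * ν^(2*m'+2)) + (1/4) * (ν * ν^(2*m')) := by ring
  have e4 : ν * ν^(2*m'+2) = ν^(2*m'+3) := by rw [← pow_succ']
  have e5 : ν * ν^(2*m') = ν^(2*m'+1) := by rw [← pow_succ']
  have mono1 : ν^(2*(m'+1)) ≤ ν^(2*m'+3) := pow_le_pow_right₀ hν1 (by omega)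
  have mono2 : ν^(2*m'+1) ≤ ν^(2*m'+3) := pow_le_pow_right₀ hν1 (by omega)
  have pos : (0:ℝ) < ν^(2*m'+3) := by positivity
  rw [e1, e2] at hchain
  rw [e3, e4, e5] at hchain
  linarith

end Density


section LiHelper

lemma li_comb {β β' : Type*} {SS : Set β} {θ : β → ℝ}
    (hli : LinearIndependent ℚ (fun b : SS => θ b.1))
    (F : Finset β') (f : β' → β) (hinj : Set.InjOn f ↑F) (hmem : ∀ b ∈ F, f b ∈ SS)
    (c : β' → ℚ) (hsum : ∑ b ∈ F, c b • θ (f b) = 0) : ∀ b ∈ F, c b = 0 := by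
  classical
  set ℓ : SS →₀ ℚ :=
    ∑ b ∈ F.attach, Finsupp.single (⟨f b.1, hmem b.1 b.2⟩ : SS) (c b.1) with hℓ
  have hcomb : Finsupp.linearCombination ℚ (fun b : SS => θ b.1) ℓ = 0 := by
    rw [hℓ, map_sum]
    have h1 : ∀ b ∈ F.attach, Finsupp.linearCombination ℚ (fun b : SS => θ b.1)
        (Finsupp.single (⟨f b.1, hmem b.1 b.2⟩ : SS) (c b.1)) = c b.1 • θ (f b.1) := by
      intro b _
      rw [Finsupp.linearCombination_single]
    rw [Finset.sum_congr rfl h1, Finset.sum_attach F (fun b => c b • θ (f b))]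
    exact hsum
  have hz := linearIndependent_iff.mp hli ℓ hcomb
  intro b hb
  have heval : ℓ ⟨f b, hmem b hb⟩ = c b := by
    rw [hℓ, Finsupp.finset_sum_apply]
    rw [Finset.sum_eq_single (⟨b, hb⟩ : {x // x ∈ F})]
    · rw [Finsupp.single_apply, if_pos rfl]
    · intro b' _ hb'
      rw [Finsupp.single_apply, if_neg]
      intro hEq
      apply hb'
      have hfb : f b'.1 = f b := congrArg Subtype.val hEq
      exact Subtype.ext (hinj b'.2 hb hfb)
    · intro hmem'
      exact absurd (Finset.mem_attach _ _) hmem'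
  rw [hz] at heval
  simpa using heval.symm

end LiHelper


section NoRel
open Filter

lemma eventually_no_relation {κ : Cardinal} {p : Ultrafilter ℕ} (S : RationalStack κ p)
    (i : ℕ) (hi : i < S.k1)
    (E : Finset (ℕ → Gk κ)) (jE : (ℕ → Gk κ) → ℕ) (gE : (ℕ → Gk κ) → (ℕ → Gk κ))
    (hjl : ∀ h ∈ E, jE h < S.l i) (hgB : ∀ h ∈ E, gE h ∈ S.Br i (jE h))
    (hinj : Set.InjOn gE ↑E)
    (q : (ℕ → Gk κ) → ℚ) (hq : ∃ h ∈ E, q h ≠ 0) :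
    ∀ᶠ n in atTop ⊓ 𝓟 S.A, (∑ h ∈ E, q h * gE h n (S.ζ i n)) ≠ 0 := by
  classical
  obtain ⟨h1, hh1E, hq1⟩ := hq
  have hex : ∃ j, ∃ h ∈ E, jE h = j ∧ q h ≠ 0 := ⟨jE h1, h1, hh1E, rfl, hq1⟩
  set j0 := Nat.find hex with hj0
  obtain ⟨h2, hh2E, hjh2, hq2⟩ := Nat.find_spec hex
  have hj0l : j0 < S.l i := by rw [hj0, ← hjh2]; exact hjl h2 hh2E
  obtain ⟨hs, hhs, θ, hθlim, hθli⟩ := S.cond_vi i hi j0 hj0l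
  -- convergence of the normalized sum
  have hlim : Tendsto (fun n => ∑ h ∈ E, (q h : ℝ) *
      (((gE h n (S.ζ i n) : ℚ) : ℝ) / ((hs n (S.ζ i n) : ℚ) : ℝ)))
      (atTop ⊓ 𝓟 S.A)
      (nhds (∑ h ∈ E, (if jE h = j0 then (q h : ℝ) * θ (gE h) else 0))) := by
    apply tendsto_finset_sum
    intro h hh
    by_cases hj : jE h = j0
    · rw [if_pos hj]
      have hmem : gE h ∈ S.Br i j0 := by rw [← hj]; exact hgB h hh
      exact (hθlim (gE h) hmem).const_mul ((q h : ℝ))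
    · rw [if_neg hj]
      by_cases hq0 : q h = 0
      · have hq0' : (q h : ℝ) = 0 := by exact_mod_cast hq0
        simp only [hq0', zero_mul]
        exact tendsto_const_nhds
      · have hgt : j0 < jE h := by
          rcases Nat.lt_or_ge (jE h) j0 with hlt | hge
          · exact absurd ⟨h, hh, rfl, hq0⟩ (Nat.find_min hex hlt)
          · omega
        have hvii := (S.cond_vii i hi j0 (jE h) hgt (hjl h hh) (gE h) (hgB h hh) hs hhs).2
        have := hvii.const_mul ((q h : ℝ))
        simpa using this
  -- the limit is nonzero
  have hne : (∑ h ∈ E, (if jE h = j0 then (q h : ℝ) * θ (gE h) else 0)) ≠ 0 := by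
    rw [Finset.sum_ite, Finset.sum_const_zero, add_zero]
    intro h0eq
    have hzero := li_comb hθli (E.filter (fun h => jE h = j0)) gE
      (hinj.mono (Finset.coe_subset.mpr (Finset.filter_subset _ _)))
      (fun h hh => by
        rw [← (Finset.mem_filter.mp hh).2]
        exact hgB h (Finset.mem_filter.mp hh).1)
      (fun h => q h)
      (by
        rw [← h0eq]
        apply Finset.sum_congr rfl
        intro h _
        rw [Rat.smul_def])
      h2 (Finset.mem_filter.mpr ⟨hh2E, hjh2⟩)
    exact hq2 hzero
  have hA : ∀ᶠ n in atTop ⊓ 𝓟 S.A, n ∈ S.A := by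
    rw [Filter.eventually_inf_principal]
    exact Filter.Eventually.of_forall (fun n hn => hn)
  filter_upwards [hlim.eventually_ne hne, hA] with n hn hnA
  intro h0eq
  apply hn
  have hden : ((hs n (S.ζ i n) : ℚ) : ℝ) ≠ 0 := by
    have hmem := S.cond_iii i hi j0 hj0l hs hhs n hnA
    rw [Finsupp.mem_support_iff] at hmem
    exact_mod_cast hmem
  have hdiv : ∑ h ∈ E, (q h : ℝ) *
      (((gE h n (S.ζ i n) : ℚ) : ℝ) / ((hs n (S.ζ i n) : ℚ) : ℝ))
      = (∑ h ∈ E, (q h : ℝ) * ((gE h n (S.ζ i n) : ℚ) : ℝ)) / ((hs n (S.ζ i n) : ℚ) : ℝ) := by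
    rw [Finset.sum_div]
    apply Finset.sum_congr rfl
    intro h _
    rw [mul_div_assoc]
  rw [hdiv]
  have hzero : (∑ h ∈ E, (q h : ℝ) * ((gE h n (S.ζ i n) : ℚ) : ℝ)) = 0 := by
    exact_mod_cast h0eq
  rw [hzero, zero_div]

end NoRel

set_option maxHeartbeats 3000000 in
/-- Lemma Lem.stack.2: solving arc equations on the levels of a stack. -/
theorem statement8 (κ : Cardinal) (hκ : Cardinal.aleph0 ≤ κ)
    (p : Ultrafilter ℕ) (hp : IsSelective p)
    (Gc : Set (ℕ → Gk κ)) (hGfin : Gc.Finite)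
    (S : RationalStack κ p) (M N : (ℕ → Gk κ) → (ℕ → Gk κ) → ℤ)
    (hAdapted : Adapted p S Gc M N)
    (ε : ℝ) (hε : 0 < ε)
    (D : Set (Idx κ)) (hD : D.Finite) :
    ∃ B : Set ℕ, B ⊆ S.A ∧ (S.A \ B).Finite ∧
      ∃ γ : ℕ → ℝ, (∀ n ∈ B, 0 < γ n) ∧
        ∀ n ∈ B, ∀ W : (ℕ → Gk κ) → Set Circ, (∀ h ∈ stackC S, HasArcLen (W h) ε) →
          ∀ ψ : Idx κ → Set Circ, IsArcFunLen ψ ε →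
            arcSupp ψ ⊆ D \ {x : Idx κ | ∃ i < S.k0, x = S.ν i} →
            ∃ χ : Idx κ → Set Circ, IsArcFunLen χ (γ n) ∧
              IsNSolK ψ (stackC S) (S.K n) W n χ := by
  classical
  obtain ⟨-, -, -, -, hint5⟩ := hAdapted
  -- 𝒞 is finite
  have hCfin : (stackC S).Finite := by
    have hsub : stackC S ⊆ ⋃ i ∈ Set.Iio S.k1, ⋃ j ∈ Set.Iio (S.l i),
        (fun h => (fun n => ((S.K n : ℚ))⁻¹ • h n)) '' (S.Br i j) := by
      rintro g ⟨i, hi, j, hj, h, hh, rfl⟩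
      exact Set.mem_biUnion hi (Set.mem_biUnion hj ⟨h, hh, rfl⟩)
    refine Set.Finite.subset ?_ hsub
    refine Set.Finite.biUnion (Set.finite_Iio _) ?_
    intro i hi
    refine Set.Finite.biUnion (Set.finite_Iio _) ?_
    intro j hj
    exact (S.Br_finite i hi j hj).image _
  set Cfin : Finset (ℕ → Gk κ) := hCfin.toFinset with hCfinDef
  have hmemC : ∀ h, h ∈ Cfin ↔ h ∈ stackC S := fun h => Set.Finite.mem_toFinset hCfin
  -- choose stack representation data for each member of 𝒞
  have hrep : ∀ h ∈ stackC S, ∃ i, i < S.k1 ∧ ∃ j, j < S.l i ∧ ∃ g, g ∈ S.Br i j ∧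
      h = fun n => ((S.K n : ℚ))⁻¹ • g n := fun h hh => hh
  choose! ih hik jh hjl gh hgB hgEq using hrep
  have hKne : ∀ n : ℕ, ((S.K n : ℚ)) ≠ 0 := by
    intro n
    have h2 := S.K_ge_two n
    exact_mod_cast (by omega : (S.K n) ≠ 0)
  have hKh : ∀ h ∈ stackC S, ∀ n, (S.K n : ℚ) • h n = gh h n := by
    intro h hh n
    have hcf := congrFun (hgEq h hh) n
    rw [hcf, smul_smul, mul_inv_cancel₀ (hKne n), one_smul]
  have hghinj : ∀ h ∈ stackC S, ∀ h' ∈ stackC S, gh h = gh h' → h = h' := by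
    intro h hh h' hh' he
    rw [hgEq h hh, hgEq h' hh', he]
  have hintseq : ∀ h ∈ stackC S, ∀ n μ, ∃ z : ℤ, gh h n μ = (z : ℚ) :=
    fun h hh => S.Br_int _ (hik h hh) _ (hjl h hh) _ (hgB h hh)
  choose! zz hzz using hintseq
  have hsuppeq : ∀ h ∈ stackC S, ∀ n, (h n).support = (gh h n).support := by
    intro h hh n
    rw [congrFun (hgEq h hh) n]
    exact Finsupp.support_smul_eq (inv_ne_zero (hKne n))
  -- accuracy parameters
  set δ : ℝ := min ε 1 / 8 with hδdef
  have hδpos : 0 < δ := by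
    rw [hδdef]
    have : 0 < min ε 1 := lt_min hε one_pos
    linarith
  set m : ℕ := Cfin.card with hm
  set NN : ℕ := ⌈(m : ℝ)/δ^2⌉₊ + 1 with hNN
  have hNN1 : 1 ≤ NN := by omega
  have hNNδ : (m : ℝ) ≤ (NN:ℝ) * δ^2 := by
    have h1 : (m:ℝ)/δ^2 ≤ (⌈(m : ℝ)/δ^2⌉₊ : ℝ) := Nat.le_ceil _
    have h2 : ((⌈(m : ℝ)/δ^2⌉₊ : ℝ)) ≤ (NN:ℝ) := by rw [hNN]; push_cast; linarith
    have h3 : (m:ℝ)/δ^2 ≤ (NN:ℝ) := le_trans h1 h2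
    calc (m:ℝ) = (m:ℝ)/δ^2 * δ^2 := by field_simp
    _ ≤ (NN:ℝ) * δ^2 := mul_le_mul_of_nonneg_right h3 (by positivity)
  -- eventual absence of small relations at each level
  have hNoRel : ∀ᶠ n in atTop ⊓ 𝓟 S.A, ∀ i : Fin S.k1,
      ∀ v : {h // h ∈ Cfin.filter (fun h' => ih h' = (i:ℕ))} →
        {z // z ∈ Finset.Icc (-(NN:ℤ)) (NN:ℤ)},
      (∃ h0, ((v h0 : ℤ)) ≠ 0) →
      (∑ h ∈ Cfin.filter (fun h' => ih h' = (i:ℕ)),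
        (if hh : h ∈ Cfin.filter (fun h' => ih h' = (i:ℕ))
          then (((v ⟨h, hh⟩ : ℤ)) : ℚ) else 0) * gh h n (S.ζ (i:ℕ) n)) ≠ 0 := by
    rw [Filter.eventually_all]
    intro i
    rw [Filter.eventually_all]
    intro v
    by_cases hv : ∃ h0, ((v h0 : ℤ)) ≠ 0
    · have hev := eventually_no_relation S (i:ℕ) i.2
        (Cfin.filter (fun h' => ih h' = (i:ℕ))) jh gh
        (fun h hh => by
          have h1 := Finset.mem_filter.mp hh
          have h2 := (hmemC h).mp h1.1
          have h3 := hjl h h2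
          rwa [h1.2] at h3)
        (fun h hh => by
          have h1 := Finset.mem_filter.mp hh
          have h2 := (hmemC h).mp h1.1
          have h3 := hgB h h2
          rwa [h1.2] at h3)
        (fun h hh h' hh' he => hghinj h ((hmemC h).mp (Finset.mem_filter.mp hh).1)
          h' ((hmemC h').mp (Finset.mem_filter.mp hh').1) he)
        (fun h => if hh : h ∈ Cfin.filter (fun h' => ih h' = (i:ℕ))
          then (((v ⟨h, hh⟩ : ℤ)) : ℚ) else 0)
        (by
          obtain ⟨h0, hh0⟩ := hv
          refine ⟨h0.1, h0.2, ?_⟩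
          simp only [dif_pos h0.2]
          exact_mod_cast hh0)
      exact hev.mono (fun n hn _ => hn)
    · exact Filter.Eventually.of_forall (fun n h => absurd h hv)
  -- eventually the new coordinates avoid D
  have hzetaD : ∀ᶠ n in atTop ⊓ 𝓟 S.A, ∀ i : Fin S.k1, S.k0 ≤ (i:ℕ) → S.ζ (i:ℕ) n ∉ D := by
    rw [Filter.eventually_all]
    intro i
    by_cases hik0 : S.k0 ≤ (i:ℕ)
    · have hfin : {n | n ∈ S.A ∧ S.ζ (i:ℕ) n ∈ D}.Finite := by
        apply Set.Finite.of_finite_image (f := fun n => S.ζ (i:ℕ) n)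
        · apply hD.subset
          rintro _ ⟨n, ⟨hnA, hnD⟩, rfl⟩
          exact hnD
        · intro n hn n' hn' heq
          by_contra hne
          exact S.cond_ii_c (i:ℕ) (i:ℕ) hik0 i.2 hik0 i.2 n hn.1 n' hn'.1
            (by simp [hne]) heq
      have hev : ∀ᶠ n in Filter.cofinite, n ∉ {n | n ∈ S.A ∧ S.ζ (i:ℕ) n ∈ D} :=
        hfin.eventually_cofinite_notMem
      rw [Nat.cofinite_eq_atTop] at hev
      rw [Filter.eventually_inf_principal]
      apply hev.mono
      intro n hn hnA _
      exact fun hmemD => hn ⟨hnA, hmemD⟩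
    · exact Filter.Eventually.of_forall (fun n h => absurd h hik0)
  -- extract the cofinite-in-A set B
  have hEv := hNoRel.and hzetaD
  rw [Filter.eventually_inf_principal, Filter.eventually_atTop] at hEv
  obtain ⟨n₀, hn₀⟩ := hEv
  refine ⟨{n | n ∈ S.A ∧ n₀ ≤ n}, fun n hn => hn.1, ?_, ?_⟩
  · apply Set.Finite.subset (Set.finite_Iio n₀)
    intro n hn
    simp only [Set.mem_diff, Set.mem_setOf_eq] at hn
    simp only [Set.mem_Iio]
    by_contra hge
    exact hn.2 ⟨hn.1, by omega⟩
  refine ⟨fun n => min ε 1 /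
      (8 * ((S.K n : ℝ) + (∑ h ∈ Cfin, ∑ μ ∈ (gh h n).support, |((gh h n μ : ℚ) : ℝ)|) + 1)),
      ?_, ?_⟩
  · intro n hn
    apply div_pos (lt_min hε one_pos)
    have h1 : (0:ℝ) ≤ (S.K n : ℝ) := Nat.cast_nonneg _
    have h2 : (0:ℝ) ≤ ∑ h ∈ Cfin, ∑ μ ∈ (gh h n).support, |((gh h n μ : ℚ) : ℝ)| :=
      Finset.sum_nonneg (fun h _ => Finset.sum_nonneg (fun μ _ => abs_nonneg _))
    linarith
  · intro n hn W hW ψ hψ hψsupp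
    have hnA : n ∈ S.A := hn.1
    have hprops := hn₀ n hn.2 hnA
    have hNR := hprops.1
    have hzD := hprops.2
    -- centers of the targets
    choose! aW haW using hW
    have hψc : ∀ ξ ∈ arcSupp ψ, ∃ a, ψ ξ = arcOf a ε := hψ.2
    choose! aψ haψ using hψc
    -- injectivity of the new coordinates at n
    have hζinj : ∀ i < S.k1, ∀ i' < S.k1, S.ζ i n = S.ζ i' n → i = i' := by
      intro i hi i' hi' he
      by_contra hne
      rcases Nat.lt_or_ge i S.k0 with h1 | h1 <;> rcases Nat.lt_or_ge i' S.k0 with h2 | h2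
      · have e1 := S.cond_i i h1 n hnA
        have e2 := S.cond_i i' h2 n hnA
        exact S.cond_ii_a i h1 i' h2 hne (by rw [← e1, ← e2, he])
      · have e1 := S.cond_i i h1 n hnA
        exact S.cond_ii_b i h1 i' h2 hi' n hnA (by rw [← e1, he])
      · have e2 := S.cond_i i' h2 n hnA
        exact S.cond_ii_b i' h2 i h1 hi n hnA (by rw [← e2, ← he])
      · exact S.cond_ii_c i i' h1 hi h2 hi' n hnA n hnA (by simp [hne]) he
    -- the new coordinates are not in the support of ψ
    have hζψ : ∀ i < S.k1, S.ζ i n ∉ arcSupp ψ := by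
      intro i hi hmem
      have hm2 := hψsupp hmem
      rcases Nat.lt_or_ge i S.k0 with h1 | h1
      · exact hm2.2 ⟨i, h1, S.cond_i i h1 n hnA⟩
      · exact hzD ⟨i, hi⟩ h1 hm2.1
    -- the center assignment
    set cc : (ℕ → ℝ) → Idx κ → ℝ := fun u μ =>
      if hζ : ∃ i, i < S.k1 ∧ S.ζ i n = μ then u hζ.choose
      else if μ ∈ arcSupp ψ then (aψ μ + ε/2)/(S.K n) else 0 with hcc
    have hccζ : ∀ (u : ℕ → ℝ), ∀ i < S.k1, cc u (S.ζ i n) = u i := by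
      intro u i hi
      have hζ : ∃ i', i' < S.k1 ∧ S.ζ i' n = S.ζ i n := ⟨i, hi, rfl⟩
      simp only [hcc]
      rw [dif_pos hζ]
      congr 1
      have hspec := hζ.choose_spec
      exact hζinj _ hspec.1 i hi hspec.2
    have hccψ : ∀ (u : ℕ → ℝ), ∀ μ ∈ arcSupp ψ, cc u μ = (aψ μ + ε/2)/(S.K n) := by
      intro u μ hμ
      have hno : ¬ ∃ i, i < S.k1 ∧ S.ζ i n = μ := by
        rintro ⟨i, hi, rfl⟩
        exact hζψ i hi hμ
      simp only [hcc]
      rw [dif_neg hno, if_pos hμ]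
    -- relation property at each level, in the integer form needed by the density lemma
    have hrelation : ∀ i, ∀ hi : i < S.k1, ∀ q : (ℕ → Gk κ) → ℤ,
        (∀ h, |q h| ≤ (NN:ℤ)) →
        (∀ h, h ∉ Cfin.filter (fun h' => ih h' = i) → q h = 0) →
        (∑ h ∈ Cfin.filter (fun h' => ih h' = i), q h * zz h n (S.ζ i n)) = 0 →
        ∀ h, q h = 0 := by
      intro i hi q hqb hq0 hqsum
      by_contra hcon
      push_neg at hcon
      obtain ⟨h0, hh0⟩ := hcon
      have hh0mem : h0 ∈ Cfin.filter (fun h' => ih h' = i) := by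
        by_contra hmem
        exact hh0 (hq0 h0 hmem)
      have hsumQ : (∑ h ∈ Cfin.filter (fun h' => ih h' = ((⟨i, hi⟩ : Fin S.k1) : ℕ)),
          (if hh : h ∈ Cfin.filter (fun h' => ih h' = ((⟨i, hi⟩ : Fin S.k1) : ℕ))
            then (((q h : ℤ)) : ℚ) else 0) * gh h n (S.ζ ((⟨i, hi⟩ : Fin S.k1) : ℕ) n)) = 0 := by
        have hstep : ∀ h ∈ Cfin.filter (fun h' => ih h' = i),
            (if hh : h ∈ Cfin.filter (fun h' => ih h' = i)
              then (((q h : ℤ)) : ℚ) else 0) * gh h n (S.ζ i n)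
            = ((q h * zz h n (S.ζ i n) : ℤ) : ℚ) := by
          intro h hh
          rw [dif_pos hh]
          have hst : h ∈ stackC S := (hmemC h).mp (Finset.mem_filter.mp hh).1
          rw [hzz h hst n (S.ζ i n)]
          push_cast
          ring
        calc (∑ h ∈ Cfin.filter (fun h' => ih h' = i),
            (if hh : h ∈ Cfin.filter (fun h' => ih h' = i)
              then (((q h : ℤ)) : ℚ) else 0) * gh h n (S.ζ i n))
            = ∑ h ∈ Cfin.filter (fun h' => ih h' = i),
              ((q h * zz h n (S.ζ i n) : ℤ) : ℚ) := Finset.sum_congr rfl hstep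
        _ = ((∑ h ∈ Cfin.filter (fun h' => ih h' = i), q h * zz h n (S.ζ i n) : ℤ) : ℚ) := by
            push_cast
            ring
        _ = 0 := by rw [hqsum]; norm_num
      exact hNR ⟨i, hi⟩
        (fun h => ⟨q h.1, by
          rw [Finset.mem_Icc]
          have hb := hqb h.1
          rw [abs_le] at hb
          exact hb⟩)
        ⟨⟨h0, hh0mem⟩, hh0⟩ hsumQ
    -- downward recursion over the levels
    have hrec : ∀ r : ℕ, r ≤ S.k1 → ∃ u : ℕ → ℝ,
        ∀ h ∈ Cfin, S.k1 - r ≤ ih h → ∃ k : ℤ,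
          |(∑ μ ∈ (gh h n).support, ((gh h n μ : ℚ) : ℝ) * cc u μ) - (aW h + ε/2) - k| ≤ δ := by
      intro r
      induction r with
      | zero =>
        intro _
        refine ⟨fun _ => 0, ?_⟩
        intro h hh hle
        have := hik h ((hmemC h).mp hh)
        omega
      | succ r ihr =>
        intro hr1
        obtain ⟨u, hu⟩ := ihr (by omega)
        have histar : S.k1 - (r+1) < S.k1 := by
          have := S.k1_pos
          omega
        -- the effect of updating the new coordinate
        have hccupd : ∀ (u' : ℕ → ℝ) (ustar : ℝ) (μ : Idx κ), μ ≠ S.ζ (S.k1 - (r+1)) n →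
            cc (Function.update u' (S.k1 - (r+1)) ustar) μ = cc u' μ := by
          intro u' ustar μ hμ
          simp only [hcc]
          by_cases hζ : ∃ i, i < S.k1 ∧ S.ζ i n = μ
          · rw [dif_pos hζ, dif_pos hζ]
            have hspec := hζ.choose_spec
            have hne : hζ.choose ≠ S.k1 - (r+1) := fun he => hμ (by rw [← hspec.2, he])
            rw [Function.update_of_ne hne]
          · rw [dif_neg hζ, dif_neg hζ]
        -- coordinates below the current level do not occur
        have hnotmem : ∀ h ∈ Cfin, S.k1 - r ≤ ih h →
            S.ζ (S.k1 - (r+1)) n ∉ (gh h n).support := by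
          intro h hh hle
          have hst : h ∈ stackC S := (hmemC h).mp hh
          exact S.cond_iv (S.k1 - (r+1)) (ih h) (by omega) (hik h hst)
            (jh h) (hjl h hst) (gh h) (hgB h hst) n hnA
        -- solve the current level by the density lemma
        obtain ⟨ustar, hustar⟩ := density_lemma
          (Cfin.filter (fun h' => ih h' = S.k1 - (r+1)))
          (fun h => zz h n (S.ζ (S.k1 - (r+1)) n))
          (fun h => (aW h + ε/2)
            - (∑ μ ∈ ((gh h n).support.erase (S.ζ (S.k1 - (r+1)) n)),
                ((gh h n μ : ℚ) : ℝ) * cc u μ))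
          δ hδpos NN hNN1
          (by
            have hcle : (Cfin.filter (fun h' => ih h' = S.k1 - (r+1))).card ≤ m := by
              rw [hm]
              exact Finset.card_filter_le _ _
            calc ((Cfin.filter (fun h' => ih h' = S.k1 - (r+1))).card : ℝ) ≤ (m:ℝ) := by
                  exact_mod_cast hcle
            _ ≤ (NN:ℝ) * δ^2 := hNNδ)
          (fun q hqb hq0 hqsum => hrelation (S.k1 - (r+1)) histar q hqb hq0 hqsum)
        refine ⟨Function.update u (S.k1 - (r+1)) ustar, ?_⟩
        intro h hh hle
        have hst : h ∈ stackC S := (hmemC h).mp hh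
        by_cases hcase : ih h = S.k1 - (r+1)
        · -- current level: use the density solution
          have hmemE : h ∈ Cfin.filter (fun h' => ih h' = S.k1 - (r+1)) :=
            Finset.mem_filter.mpr ⟨hh, hcase⟩
          obtain ⟨k, hk⟩ := hustar h hmemE
          refine ⟨k, ?_⟩
          have hζsupp : S.ζ (S.k1 - (r+1)) n ∈ (gh h n).support := by
            have := S.cond_iii (ih h) (hik h hst) (jh h) (hjl h hst) (gh h) (hgB h hst) n hnA
            rwa [hcase] at this
          have hsplit : (∑ μ ∈ (gh h n).support,
              ((gh h n μ : ℚ) : ℝ) * cc (Function.update u (S.k1 - (r+1)) ustar) μ)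
              = ((zz h n (S.ζ (S.k1 - (r+1)) n) : ℤ) : ℝ) * ustar
                + (∑ μ ∈ ((gh h n).support.erase (S.ζ (S.k1 - (r+1)) n)),
                    ((gh h n μ : ℚ) : ℝ) * cc u μ) := by
            rw [← Finset.add_sum_erase _ _ hζsupp]
            congr 1
            · rw [hccζ _ _ histar, Function.update_self]
              rw [hzz h hst n (S.ζ (S.k1 - (r+1)) n)]
              norm_num
            · apply Finset.sum_congr rfl
              intro μ hμ
              rw [hccupd u ustar μ (Finset.ne_of_mem_erase hμ)]
          rw [hsplit]
          calc |((zz h n (S.ζ (S.k1 - (r+1)) n) : ℤ) : ℝ) * ustar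
              + (∑ μ ∈ ((gh h n).support.erase (S.ζ (S.k1 - (r+1)) n)),
                  ((gh h n μ : ℚ) : ℝ) * cc u μ) - (aW h + ε/2) - k|
              = |((zz h n (S.ζ (S.k1 - (r+1)) n) : ℤ) : ℝ) * ustar
                - ((aW h + ε/2)
                  - (∑ μ ∈ ((gh h n).support.erase (S.ζ (S.k1 - (r+1)) n)),
                      ((gh h n μ : ℚ) : ℝ) * cc u μ)) - k| := by
                congr 1
                ring
          _ ≤ δ := hk
        · -- previously solved levels are untouched
          have hle' : S.k1 - r ≤ ih h := by omega
          obtain ⟨k, hk⟩ := hu h hh hle'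
          refine ⟨k, ?_⟩
          have hsame : (∑ μ ∈ (gh h n).support,
              ((gh h n μ : ℚ) : ℝ) * cc (Function.update u (S.k1 - (r+1)) ustar) μ)
              = ∑ μ ∈ (gh h n).support, ((gh h n μ : ℚ) : ℝ) * cc u μ := by
            apply Finset.sum_congr rfl
            intro μ hμ
            rw [hccupd u ustar μ]
            intro he
            exact hnotmem h hh hle' (he ▸ hμ)
          rw [hsame]
          exact hk
    -- the final center assignment
    obtain ⟨uf, huf⟩ := hrec S.k1 le_rfl
    have husolved : ∀ h ∈ stackC S, ∃ k : ℤ,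
        |(∑ μ ∈ (gh h n).support, ((gh h n μ : ℚ) : ℝ) * cc uf μ) - (aW h + ε/2) - k| ≤ δ := by
      intro h hh
      exact huf h ((hmemC h).mpr hh) (by omega)
    beta_reduce
    set Rt : ℝ := ∑ h ∈ Cfin, ∑ μ ∈ (gh h n).support, |((gh h n μ : ℚ) : ℝ)| with hRtdef
    have hRt0 : (0:ℝ) ≤ Rt :=
      Finset.sum_nonneg (fun h _ => Finset.sum_nonneg (fun μ _ => abs_nonneg _))
    set γv : ℝ := min ε 1 / (8 * ((S.K n : ℝ) + Rt + 1)) with hγv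
    have hmin1 : 0 < min ε 1 := lt_min hε one_pos
    have hKpos : (0:ℝ) < (S.K n : ℝ) := by
      have h2 := S.K_ge_two n
      exact_mod_cast (by omega : 0 < S.K n)
    have hden : (0:ℝ) < 8*((S.K n:ℝ) + Rt + 1) := by positivity
    have hγpos : 0 < γv := by rw [hγv]; positivity
    have hKγ : (S.K n : ℝ) * γv ≤ min ε 1 / 8 := by
      have heq : (S.K n:ℝ) * γv = min ε 1 * ((S.K n:ℝ)/(8*((S.K n:ℝ)+Rt+1))) := by
        rw [hγv]; ring
      have hfrac : (S.K n:ℝ)/(8*((S.K n:ℝ)+Rt+1)) ≤ 1/8 := by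
        rw [div_le_div_iff₀ hden (by norm_num)]
        nlinarith [hRt0, hKpos]
      calc (S.K n:ℝ) * γv = min ε 1 * ((S.K n:ℝ)/(8*((S.K n:ℝ)+Rt+1))) := heq
      _ ≤ min ε 1 * (1/8) := mul_le_mul_of_nonneg_left hfrac (le_of_lt hmin1)
      _ = min ε 1 / 8 := by ring
    have hRtγ : Rt * γv ≤ min ε 1 / 8 := by
      have heq : Rt * γv = min ε 1 * (Rt/(8*((S.K n:ℝ)+Rt+1))) := by
        rw [hγv]; ring
      have hfrac : Rt/(8*((S.K n:ℝ)+Rt+1)) ≤ 1/8 := by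
        rw [div_le_div_iff₀ hden (by norm_num)]
        nlinarith [hRt0, hKpos]
      calc Rt * γv = min ε 1 * (Rt/(8*((S.K n:ℝ)+Rt+1))) := heq
      _ ≤ min ε 1 * (1/8) := mul_le_mul_of_nonneg_left hfrac (le_of_lt hmin1)
      _ = min ε 1 / 8 := by ring
    -- the support of χ
    set F : Set (Idx κ) := arcSupp ψ ∪ (⋃ h ∈ Cfin, ((gh h n).support : Set (Idx κ))) with hF
    have hFfin : F.Finite := by
      rw [hF]
      exact (hψ.1.2).union (Set.Finite.biUnion (Cfin.finite_toSet)
        (fun h _ => (gh h n).support.finite_toSet))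
    set χ : Idx κ → Set Circ := fun ξ =>
      if ξ ∈ F then arcOf (cc uf ξ - γv/2) γv else Set.univ with hχ
    have hχF : ∀ ξ ∈ F, χ ξ = arcOf (cc uf ξ - γv/2) γv := by
      intro ξ hξ
      simp only [hχ]
      rw [if_pos hξ]
    have hχnF : ∀ ξ, ξ ∉ F → χ ξ = Set.univ := by
      intro ξ hξ
      simp only [hχ]
      rw [if_neg hξ]
    have harcfun : IsArcFun χ := by
      constructor
      · intro ξ
        by_cases hξ : ξ ∈ F
        · rw [hχF ξ hξ]; exact isArc_arcOf _ _
        · rw [hχnF ξ hξ]; exact isArc_univ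
      · apply hFfin.subset
        intro ξ hξ
        by_contra hξF
        exact hξ (hχnF ξ hξF)
    refine ⟨χ, ⟨harcfun, ?_⟩, harcfun, ?_, ?_⟩
    · -- arcs of χ have length γv
      intro ξ hξ
      have hξF : ξ ∈ F := by
        by_contra hξF
        exact hξ (hχnF ξ hξF)
      rw [hχF ξ hξF]
      exact ⟨cc uf ξ - γv/2, rfl⟩
    · -- the condition K·χ ≤ ψ
      intro ξ
      by_cases hξψ : ξ ∈ arcSupp ψ
      · right
        have hξF : ξ ∈ F := by rw [hF]; exact Set.mem_union_left _ hξψ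
        show closure (smulArc ((S.K n : ℚ)) (χ ξ)) ⊆ ψ ξ
        rw [hχF ξ hξF]
        -- the image of the scaled arc
        have hsub1 : smulArc ((S.K n : ℚ)) (arcOf (cc uf ξ - γv/2) γv)
            ⊆ toCirc '' ((fun r => ((S.K n : ℤ) : ℝ) * r) ''
              Set.Ioo (cc uf ξ - γv/2) (cc uf ξ - γv/2 + γv)) := by
          have := smulArc_int_subset (S.K n : ℤ) (Set.Ioo (cc uf ξ - γv/2) (cc uf ξ - γv/2 + γv))
          rw [show (((S.K n : ℤ)) : ℚ) = ((S.K n : ℚ)) by push_cast; ring] at this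
          exact this
        have hsub2 : ((fun r => ((S.K n : ℤ) : ℝ) * r) ''
            Set.Ioo (cc uf ξ - γv/2) (cc uf ξ - γv/2 + γv))
            ⊆ Set.Icc ((S.K n:ℝ) * (cc uf ξ - γv/2)) ((S.K n:ℝ) * (cc uf ξ - γv/2) + (S.K n:ℝ)*γv) := by
          rintro _ ⟨r, hr, rfl⟩
          have h1 : ((S.K n : ℤ) : ℝ) = (S.K n : ℝ) := by push_cast; ring
          rw [h1]
          constructor
          · nlinarith [hr.1, hKpos]
          · nlinarith [hr.2, hKpos]
        have hclosed : IsClosed (toCirc '' Set.Icc ((S.K n:ℝ) * (cc uf ξ - γv/2))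
            ((S.K n:ℝ) * (cc uf ξ - γv/2) + (S.K n:ℝ)*γv)) :=
          (isCompact_Icc.image continuous_toCirc).isClosed
        have hclos : closure (smulArc ((S.K n : ℚ)) (arcOf (cc uf ξ - γv/2) γv))
            ⊆ toCirc '' Set.Icc ((S.K n:ℝ) * (cc uf ξ - γv/2))
              ((S.K n:ℝ) * (cc uf ξ - γv/2) + (S.K n:ℝ)*γv) := by
          apply closure_minimal _ hclosed
          exact subset_trans hsub1 (Set.image_mono hsub2)
        apply subset_trans hclos
        rw [haψ ξ hξψ]
        unfold arcOf
        apply Set.image_mono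
        have hccval := hccψ uf ξ hξψ
        intro r hr
        rw [hccval] at hr
        have hKne' : (S.K n : ℝ) ≠ 0 := ne_of_gt hKpos
        have hlo : (S.K n:ℝ) * ((aψ ξ + ε/2)/(S.K n) - γv/2)
            = aψ ξ + ε/2 - (S.K n:ℝ)*γv/2 := by field_simp
        rw [hlo] at hr
        have hKγε : (S.K n : ℝ) * γv < ε := by
          have h1 : min ε 1 ≤ ε := min_le_left _ _
          have := hKγ
          linarith
        constructor
        · have := hr.1; linarith
        · have := hr.2; linarith
      · have hψuniv : ψ ξ = Set.univ := not_not.mp (fun hne => hξψ hne)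
        right
        rw [hψuniv]
        exact Set.subset_univ _
    · -- the arc-sum equations
      intro h hh
      have hhC : h ∈ Cfin := (hmemC h).mpr hh
      have hsum_eq : (∑ μ ∈ (h n).support, smulArc ((S.K n : ℚ) * h n μ) (χ μ))
          = ∑ μ ∈ (gh h n).support, smulArc ((gh h n μ : ℚ)) (χ μ) := by
        rw [hsuppeq h hh n]
        apply Finset.sum_congr rfl
        intro μ _
        have hz := DFunLike.congr_fun (hKh h hh n) μ
        rw [Finsupp.smul_apply, smul_eq_mul] at hz
        rw [hz]
      rw [hsum_eq]
      intro y hy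
      obtain ⟨w, hwmem, rfl⟩ := mem_finsetSum_sets _ _ y hy
      -- unfold the membership of each summand
      have hwval : ∀ μ ∈ (gh h n).support, ∃ r : ℝ,
          r ∈ Set.Ioo (cc uf μ - γv/2) (cc uf μ - γv/2 + γv) ∧
          w μ = toCirc (((zz h n μ : ℤ) : ℝ) * r) := by
        intro μ hμ
        have hμF : μ ∈ F := by
          rw [hF]
          exact Set.mem_union_right _ (Set.mem_biUnion hhC hμ)
        have hw := hwmem μ hμ
        rw [hχF μ hμF] at hw
        have hz : ((gh h n μ : ℚ)) = (((zz h n μ : ℤ)) : ℚ) := hzz h hh n μ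
        rw [hz] at hw
        have hw2 := smulArc_int_subset (zz h n μ)
          (Set.Ioo (cc uf μ - γv/2) (cc uf μ - γv/2 + γv)) hw
        obtain ⟨t, ⟨r, hr, rfl⟩, ht⟩ := hw2
        exact ⟨r, hr, ht.symm⟩
      choose! rr hrr1 hrr2 using hwval
      -- the sum is the image of a real number
      have hyeq : (∑ μ ∈ (gh h n).support, w μ)
          = toCirc (∑ μ ∈ (gh h n).support, ((zz h n μ : ℤ) : ℝ) * rr μ) := by
        rw [toCirc_sum]
        apply Finset.sum_congr rfl
        intro μ hμ
        exact hrr2 μ hμ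
      rw [hyeq]
      -- the estimate
      obtain ⟨k, hk⟩ := husolved h hh
      set X : ℝ := ∑ μ ∈ (gh h n).support, ((zz h n μ : ℤ) : ℝ) * rr μ with hX
      set SC : ℝ := ∑ μ ∈ (gh h n).support, ((gh h n μ : ℚ) : ℝ) * cc uf μ with hSC
      have hXSC : |X - SC| ≤ Rt * γv / 2 := by
        have hterm : ∀ μ ∈ (gh h n).support,
            |((zz h n μ : ℤ) : ℝ) * rr μ - ((gh h n μ : ℚ) : ℝ) * cc uf μ|
            ≤ |((gh h n μ : ℚ) : ℝ)| * (γv/2) := by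
          intro μ hμ
          have hz : ((gh h n μ : ℚ) : ℝ) = ((zz h n μ : ℤ) : ℝ) := by
            rw [hzz h hh n μ]; push_cast; ring
          rw [hz]
          rw [← mul_sub, abs_mul]
          apply mul_le_mul_of_nonneg_left _ (abs_nonneg _)
          have hr := hrr1 μ hμ
          rw [abs_le]
          constructor
          · have := hr.1; linarith
          · have := hr.2; linarith
        have hsle : Rt * γv / 2 = Rt * (γv / 2) := by ring
        calc |X - SC| = |∑ μ ∈ (gh h n).support,
              (((zz h n μ : ℤ) : ℝ) * rr μ - ((gh h n μ : ℚ) : ℝ) * cc uf μ)| := by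
              rw [hX, hSC, Finset.sum_sub_distrib]
        _ ≤ ∑ μ ∈ (gh h n).support,
              |((zz h n μ : ℤ) : ℝ) * rr μ - ((gh h n μ : ℚ) : ℝ) * cc uf μ| :=
            Finset.abs_sum_le_sum_abs _ _
        _ ≤ ∑ μ ∈ (gh h n).support, |((gh h n μ : ℚ) : ℝ)| * (γv/2) :=
            Finset.sum_le_sum hterm
        _ = (∑ μ ∈ (gh h n).support, |((gh h n μ : ℚ) : ℝ)|) * (γv/2) := by
            rw [Finset.sum_mul]
        _ ≤ Rt * (γv/2) := by
            apply mul_le_mul_of_nonneg_right _ (by positivity)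
            rw [hRtdef]
            apply Finset.single_le_sum (f := fun h' => ∑ μ ∈ (gh h' n).support,
              |((gh h' n μ : ℚ) : ℝ)|) _ hhC
            intro h' _
            exact Finset.sum_nonneg (fun μ _ => abs_nonneg _)
        _ = Rt * γv / 2 := by ring
      -- the final containment
      have hbound : |X - (aW h + ε/2) - k| < ε/2 := by
        have h1 : |X - (aW h + ε/2) - k| ≤ |X - SC| + |SC - (aW h + ε/2) - k| := by
          have : X - (aW h + ε/2) - k = (X - SC) + (SC - (aW h + ε/2) - k) := by ring
          rw [this]
          exact abs_add_le _ _
        have h2 : min ε 1 ≤ ε := min_le_left _ _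
        have h3 : Rt * γv / 2 ≤ min ε 1 / 16 := by linarith
        have h4 : δ ≤ ε / 8 := by rw [hδdef]; linarith
        have h5 : Rt * γv / 2 ≤ ε/16 := by linarith
        calc |X - (aW h + ε/2) - k| ≤ |X - SC| + |SC - (aW h + ε/2) - k| := h1
        _ ≤ Rt * γv / 2 + δ := add_le_add hXSC hk
        _ ≤ ε/16 + ε/8 := add_le_add h5 h4
        _ < ε/2 := by linarith
      have hXmem : X ∈ Set.Ioo (aW h + (k:ℝ)) (aW h + (k:ℝ) + ε) := by
        rw [abs_lt] at hbound
        constructor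
        · have := hbound.1; linarith
        · have := hbound.2; linarith
      rw [haW h hh]
      rw [← arcOf_translate (aW h) ε k]
      exact ⟨X, hXmem, rfl⟩

end
end

section
/- Let p be a selective ultrafilter on ω, let 𝒢 be a finite subset of G^ω and let C ∈ p. Suppose ζ, ζ* ∈ κ^ω are such that there exists g* ∈ 𝒢 with {n ∈ C : ζ(n) ∈ supp g*(n)} ∈ p and {n ∈ C : ζ(n) = ζ*(n)} ∉ p. Then there exist B' ∈ p with B' ⊆ C and 𝓗 ⊆ 𝒢 such that: (⋆1) (ζ(n))_{n∈B'} is either constant or one-to-one; (⋆2) for each g ∈ 𝒢, either ζ(n) ∈ supp g(n) for each n ∈ B', or ζ(n) ∉ supp g(n) for each n ∈ B'; (⋆3) 𝓗 = {g ∈ 𝒢 : ∀n ∈ B', ζ(n) ∈ supp g(n)} is nonempty; (⋆4) for each g ∈ 𝓗, the sequence (g(n)(ζ(n)))_{n∈B'} converges strictly monotonically to an element of the extended real line, or is constant and equal to a rational number; (⋆5) given f, g ∈ 𝓗, either |g(n)(ζ(n))| > |f(n)(ζ(n))| for each n ∈ B', or |g(n)(ζ(n))| = |f(n)(ζ(n))|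 for each n ∈ B', or |g(n)(ζ(n))| < |f(n)(ζ(n))| for each n ∈ B'; (⋆6) for each pair g, h ∈ 𝓗, the sequence (g(n)(ζ(n))/h(n)(ζ(n)))_{n∈B'} converges to +∞, −∞ or a real number; (⋆7) ζ(n) ≠ ζ*(m) for each n, m ∈ B'. -/
open Filter Topology Set Pointwise

noncomputable section

/-- The conditions (⋆1)–(⋆7) of Lemma "Case A". -/
def StarConds {κ : Cardinal} (Gc : Set (ℕ → Gk κ)) (ζ ζs : ℕ → Idx κ)
    (B' : Set ℕ) (H : Set (ℕ → Gk κ)) : Prop :=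
  -- (⋆1)
  ((∃ ν : Idx κ, ∀ n ∈ B', ζ n = ν) ∨ Set.InjOn ζ B') ∧
  -- (⋆2)
  (∀ g ∈ Gc, (∀ n ∈ B', ζ n ∈ (g n).support) ∨ (∀ n ∈ B', ζ n ∉ (g n).support)) ∧
  -- (⋆3)
  (H = {g ∈ Gc | ∀ n ∈ B', ζ n ∈ (g n).support} ∧ H.Nonempty) ∧
  -- (⋆4)
  (∀ g ∈ H,
    (StrictMonoOnA B' (fun n => (g n (ζ n) : ℝ)) ∧ ConvETo B' (fun n => (g n (ζ n) : ℝ))) ∨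
    (∃ q : ℚ, ∀ n ∈ B', g n (ζ n) = q)) ∧
  -- (⋆5)
  (∀ f ∈ H, ∀ g ∈ H,
    (∀ n ∈ B', |g n (ζ n)| > |f n (ζ n)|) ∨ (∀ n ∈ B', |g n (ζ n)| = |f n (ζ n)|) ∨
    (∀ n ∈ B', |g n (ζ n)| < |f n (ζ n)|)) ∧
  -- (⋆6)
  (∀ g ∈ H, ∀ h ∈ H, ConvETo B' (fun n => (g n (ζ n) : ℝ) / (h n (ζ n) : ℝ))) ∧
  -- (⋆7)
  (∀ n ∈ B', ∀ m ∈ B', ζ n ≠ ζs m)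


section AuxLemmas

variable {p : Ultrafilter ℕ}


lemma aux_finite_not_mem (hnp : ∀ n : ℕ, {n} ∉ p) {S : Set ℕ} (hS : S.Finite) : S ∉ p := by
  intro h
  obtain ⟨a, -, ha⟩ := Ultrafilter.eq_pure_of_finite_mem hS h
  exact hnp a (by rw [ha]; exact rfl)

lemma aux_cofinite_mem (hnp : ∀ n : ℕ, {n} ∉ p) {S : Set ℕ} (hS : Sᶜ.Finite) : S ∈ p := by
  have := aux_finite_not_mem hnp hS
  rwa [Ultrafilter.compl_mem_iff_notMem, not_not] at this

/-- Diagonalization lemma for selective ultrafilters. -/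
lemma aux_diagLemma (hnp : ∀ n : ℕ, {n} ∉ p)
    (hp : IsSelective p)
    (A : ℕ → Set ℕ) (hA : ∀ n, A n ∈ p) :
    ∃ D ∈ p, ∀ n ∈ D, ∀ m ∈ D, n < m → m ∈ A n := by
  classical
  obtain ⟨A', hA'p, hA'sub, hA'gt, hA'self⟩ :
      ∃ A' : ℕ → Set ℕ, (∀ n, A' n ∈ p) ∧ (∀ n, A' n ⊆ A n) ∧
        (∀ n m, m ∈ A' n → n < m) ∧ (∀ m, m ∉ A' m) := by
    refine ⟨fun n => {m | n < m} ∩ ⋂ k ∈ Finset.range (n + 1), A k, ?_, ?_, ?_, ?_⟩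
    · intro n
      refine Filter.inter_mem (aux_cofinite_mem hnp ?_)
        ((Filter.biInter_mem (Finset.range (n+1)).finite_toSet).mpr fun k _ => hA k)
      have : {m | n < m}ᶜ = Set.Iic n := by ext m; simp [Set.mem_Iic, not_lt]
      rw [this]; exact Set.finite_Iic n
    · intro n m hm
      have := hm.2
      rw [Set.mem_iInter₂] at this
      exact this n (Finset.self_mem_range_succ n)
    · exact fun n m hm => hm.1
    · exact fun m hm => lt_irrefl m (hm.1)
  obtain ⟨f, hf⟩ : ∃ f : ℕ → ℕ, ∀ m, m ∉ A' (f m) ∧ ∀ k, m ∉ A' k → f m ≤ k := by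
    have hself : ∀ m : ℕ, ∃ n, m ∉ A' n := fun m => ⟨m, hA'self m⟩
    exact ⟨fun m => Nat.find (hself m),
      fun m => ⟨Nat.find_spec (hself m), fun k hk => Nat.find_le hk⟩⟩
  have hfib : ∀ k, {n | f n = k} ∉ p := by
    intro k hk
    have hempty : {n | f n = k} ∩ A' k = ∅ := by
      ext m
      simp only [Set.mem_inter_iff, Set.mem_setOf_eq, Set.mem_empty_iff_false, iff_false]
      rintro ⟨h1, h2⟩
      exact (h1 ▸ (hf m).1) h2
    have : (∅ : Set ℕ) ∈ p := hempty ▸ Filter.inter_mem hk (hA'p k)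
    exact absurd this (Ultrafilter.empty_notMem (f := p))
  obtain ⟨B, hBp, hBinj⟩ := hp f hfib
  have hBfin : ∀ n, (B \ A' n).Finite := by
    intro n
    have hsub : B \ A' n ⊆ {m ∈ B | f m ≤ n} := by
      rintro m ⟨hmB, hmA⟩
      exact ⟨hmB, (hf m).2 n hmA⟩
    refine Set.Finite.subset ?_ hsub
    refine Set.Finite.of_finite_image (Set.Finite.subset (Set.finite_Iic n) ?_)
      (hBinj.mono fun m hm => hm.1)
    rintro x ⟨m, hm, rfl⟩
    exact hm.2
  obtain ⟨φ, hφmono, hφgt, hφprop⟩ :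
      ∃ φ : ℕ → ℕ, Monotone φ ∧ (∀ n, n < φ n) ∧ ∀ n, ∀ m ∈ B, φ n ≤ m → m ∈ A' n := by
    refine ⟨fun n => (Finset.range (n+1)).sup (fun k => (hBfin k).toFinset.sup id) + n + 1,
      ?_, fun n => by dsimp only; omega, ?_⟩
    · intro a b hab
      have h1 := Finset.sup_mono (f := fun k => (hBfin k).toFinset.sup id)
        (Finset.range_subset_range.mpr (by omega : a + 1 ≤ b + 1))
      dsimp only
      omega
    · intro n m hmB hm
      by_contra hmA
      have h1 : m ∈ (hBfin n).toFinset := (Set.Finite.mem_toFinset _).mpr ⟨hmB, hmA⟩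
      have h2 : m ≤ (hBfin n).toFinset.sup id := Finset.le_sup (f := id) h1
      have h3 : (hBfin n).toFinset.sup id ≤
          (Finset.range (n+1)).sup (fun k => (hBfin k).toFinset.sup id) :=
        Finset.le_sup (f := fun k => (hBfin k).toFinset.sup id) (Finset.self_mem_range_succ n)
      dsimp only at hm
      omega
  obtain ⟨σ, hσ0, hσsucc⟩ : ∃ σ : ℕ → ℕ, σ 0 = 0 ∧ ∀ k, σ (k+1) = φ (σ k) :=
    ⟨fun k => Nat.rec 0 (fun _ ih => φ ih) k, rfl, fun k => rfl⟩
  have hσmono : StrictMono σ := strictMono_nat_of_lt_succ (fun k => by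
    rw [hσsucc]; exact hφgt (σ k))
  obtain ⟨F, hF⟩ : ∃ F : ℕ → ℕ, ∀ m, (m < σ (F m + 1)) ∧ ∀ k, m < σ (k+1) → F m ≤ k := by
    have hFex : ∀ m : ℕ, ∃ k, m < σ (k+1) :=
      fun m => ⟨m, lt_of_lt_of_le (Nat.lt_succ_self m) (hσmono.le_apply)⟩
    exact ⟨fun m => Nat.find (hFex m),
      fun m => ⟨Nat.find_spec (hFex m), fun k hk => Nat.find_le hk⟩⟩
  have hFfib : ∀ k, {m | F m = k} ∉ p := by
    intro k hk
    refine aux_finite_not_mem hnp (Set.Finite.subset (Set.finite_Iio (σ (k+1))) ?_) hk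
    intro m hm
    have := (hF m).1
    rw [hm] at this
    exact this
  obtain ⟨D₀, hD₀p, hD₀inj⟩ := hp F hFfib
  obtain ⟨r, hr⟩ : ∃ r, {m | F m % 2 = r} ∈ p := by
    rcases Ultrafilter.mem_or_compl_mem p {m | F m % 2 = 0} with h | h
    · exact ⟨0, h⟩
    · refine ⟨1, Filter.mem_of_superset h ?_⟩
      intro m hm
      simp only [Set.mem_compl_iff, Set.mem_setOf_eq] at hm ⊢
      omega
  refine ⟨B ∩ (D₀ ∩ {m | F m % 2 = r}), Filter.inter_mem hBp (Filter.inter_mem hD₀p hr), ?_⟩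
  rintro n ⟨hnB, hnD₀, hnr⟩ m ⟨hmB, hmD₀, hmr⟩ hnm
  have hFle : F n ≤ F m := (hF n).2 (F m) (lt_trans hnm (hF m).1)
  have hFne : F n ≠ F m := fun h => Nat.ne_of_lt hnm (hD₀inj hnD₀ hmD₀ h)
  have hF2 : F n + 2 ≤ F m := by
    have : F n % 2 = F m % 2 := by
      rw [show F n % 2 = r from hnr, show F m % 2 = r from hmr]
    omega
  have hmσ : σ (F m) ≤ m := by
    by_contra hcon
    push_neg at hcon
    have h1 : σ ((F m - 1) + 1) = σ (F m) := by congr 1; omega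
    have := (hF m).2 (F m - 1) (h1 ▸ hcon)
    omega
  have hchain : φ n ≤ m := by
    calc φ n ≤ φ (σ (F n + 1)) := hφmono (le_of_lt (hF n).1)
    _ = σ (F n + 2) := (hσsucc _).symm
    _ ≤ σ (F m) := hσmono.monotone (by omega)
    _ ≤ m := hmσ
  exact hA'sub n (hφprop n m hmB hchain)

lemma aux_constOrInj {α : Type*} (hpsel : IsSelective p) (x : ℕ → α) :
    ∃ D : Set ℕ, D ∈ p ∧ ((∃ a, ∀ n ∈ D, x n = a) ∨ Set.InjOn x D) := by
  classical
  have hex : ∀ m : ℕ, ∃ k, x k = x m := fun m => ⟨m, rfl⟩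
  obtain ⟨f, hf1, hf2⟩ : ∃ f : ℕ → ℕ, (∀ m, x (f m) = x m) ∧ (∀ m k, x k = x m → f m ≤ k) :=
    ⟨fun m => Nat.find (hex m), fun m => Nat.find_spec (hex m), fun m k hk => Nat.find_le hk⟩
  by_cases hc : ∃ k, {m | f m = k} ∈ p
  · obtain ⟨k, hk⟩ := hc
    refine ⟨{m | f m = k}, hk, Or.inl ⟨x k, fun n hn => ?_⟩⟩
    rw [← hf1 n, hn]
  · push_neg at hc
    obtain ⟨B, hBp, hBinj⟩ := hpsel f hc
    refine ⟨B, hBp, Or.inr ?_⟩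
    intro m hm m' hm' hxy
    refine hBinj hm hm' ?_
    have h1 : f m ≤ f m' := hf2 m (f m') (by rw [hf1 m', hxy])
    have h2 : f m' ≤ f m := hf2 m' (f m) (by rw [hf1 m, hxy])
    omega


lemma aux_ml (hnp : ∀ n : ℕ, {n} ∉ p) (hpsel : IsSelective p) (x : ℕ → ℝ) :
    ∃ D : Set ℕ, D ∈ p ∧
      ((∃ c, ∀ n ∈ D, x n = c) ∨ StrictMonoOn x D ∨ StrictAntiOn x D) := by
  classical
  by_cases hW : ∃ n₀, {m | x m = x n₀} ∈ p
  · obtain ⟨n₀, h⟩ := hW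
    exact ⟨_, h, Or.inl ⟨x n₀, fun n hn => hn⟩⟩
  · push_neg at hW
    have hUV : ∀ n, {m | x n < x m} ∈ p ∨ {m | x m < x n} ∈ p := by
      intro n
      rcases Ultrafilter.mem_or_compl_mem p {m | x n < x m} with h | h
      · exact Or.inl h
      rcases Ultrafilter.mem_or_compl_mem p {m | x m < x n} with h2 | h2
      · exact Or.inr h2
      exfalso
      refine hW n (Filter.mem_of_superset (Filter.inter_mem h h2) ?_)
      rintro m ⟨ha, hb⟩
      simp only [Set.mem_compl_iff, Set.mem_setOf_eq, not_lt] at ha hb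
      exact le_antisymm ha hb
    rcases Ultrafilter.mem_or_compl_mem p {n | {m | x n < x m} ∈ p} with hU | hU
    · obtain ⟨D', hD'p, hD'⟩ := aux_diagLemma hnp hpsel
        (fun n => if {m | x n < x m} ∈ p then {m | x n < x m} else Set.univ)
        (fun n => by split_ifs with h; exacts [h, Filter.univ_mem])
      refine ⟨D' ∩ {n | {m | x n < x m} ∈ p}, Filter.inter_mem hD'p hU,
        Or.inr (Or.inl ?_)⟩
      intro a ha b hb hab
      have := hD' a ha.1 b hb.1 hab
      rw [if_pos (show {m | x a < x m} ∈ p from ha.2)] at this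
      exact this
    · have hV : {n | {m | x m < x n} ∈ p} ∈ p := by
        refine Filter.mem_of_superset hU ?_
        intro n hn
        rcases hUV n with h | h
        · exact absurd h hn
        · exact h
      obtain ⟨D', hD'p, hD'⟩ := aux_diagLemma hnp hpsel
        (fun n => if {m | x m < x n} ∈ p then {m | x m < x n} else Set.univ)
        (fun n => by split_ifs with h; exacts [h, Filter.univ_mem])
      refine ⟨D' ∩ {n | {m | x m < x n} ∈ p}, Filter.inter_mem hD'p hV,
        Or.inr (Or.inr ?_)⟩
      intro a ha b hb hab
      have := hD' a ha.1 b hb.1 hab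
      rw [if_pos (show {m | x m < x a} ∈ p from ha.2)] at this
      exact this

lemma aux_monoConv {D : Set ℕ} (hD : D.Nonempty) {x : ℕ → ℝ} (hx : MonotoneOn x D) :
    ConvETo D x := by
  by_cases hb : BddAbove (x '' D)
  · left
    refine ⟨sSup (x '' D), tendsto_order.mpr ⟨?_, ?_⟩⟩
    · intro a ha
      obtain ⟨y, ⟨n₀, hn₀D, rfl⟩, hy⟩ := exists_lt_of_lt_csSup (hD.image x) ha
      have hmem : {n | n₀ ≤ n} ∩ D ∈ atTop ⊓ 𝓟 D :=
        Filter.inter_mem_inf (Filter.mem_atTop n₀) (Filter.mem_principal_self D)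
      refine Filter.mem_of_superset hmem ?_
      rintro n ⟨h1, h2⟩
      exact lt_of_lt_of_le hy (hx hn₀D h2 h1)
    · intro b hb'
      refine Filter.mem_of_superset (Filter.mem_inf_of_right (Filter.mem_principal_self D)) ?_
      intro n hn
      exact lt_of_le_of_lt (le_csSup hb ⟨n, hn, rfl⟩) hb'
  · right; left
    rw [tendsto_atTop]
    intro b
    obtain ⟨y, ⟨n₀, hn₀D, rfl⟩, hy⟩ := not_bddAbove_iff.mp hb b
    have hmem : {n | n₀ ≤ n} ∩ D ∈ atTop ⊓ 𝓟 D :=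
      Filter.inter_mem_inf (Filter.mem_atTop n₀) (Filter.mem_principal_self D)
    refine Filter.mem_of_superset hmem ?_
    rintro n ⟨h1, h2⟩
    exact le_of_lt (lt_of_lt_of_le hy (hx hn₀D h2 h1))

lemma aux_antiConv {D : Set ℕ} (hD : D.Nonempty) {x : ℕ → ℝ} (hx : AntitoneOn x D) :
    ConvETo D x := by
  have h : ConvETo D (fun n => - x n) :=
    aux_monoConv hD (fun a ha b hb hab => neg_le_neg (hx ha hb hab))
  rcases h with ⟨c, hc⟩ | h | h
  · exact Or.inl ⟨-c, by simpa using hc.neg⟩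
  · exact Or.inr (Or.inr (tendsto_neg_atTop_iff.mp h))
  · exact Or.inr (Or.inl (tendsto_neg_atBot_iff.mp h))

lemma aux_constConv {D : Set ℕ} {x : ℕ → ℝ} {c : ℝ} (h : ∀ n ∈ D, x n = c) : ConvETo D x := by
  left
  refine ⟨c, Filter.Tendsto.congr' ?_ tendsto_const_nhds⟩
  refine Filter.eventuallyEq_of_mem (Filter.mem_inf_of_right (Filter.mem_principal_self D)) ?_
  intro n hn
  exact (h n hn).symm

lemma aux_freeSet {α : Type*} (hnp : ∀ n : ℕ, {n} ∉ p) (hpsel : IsSelective p)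
    (ζ ζs : ℕ → α) (B : Set ℕ) (hB : B ∈ p) (hinj : Set.InjOn ζ B)
    (hdiag : ∀ n ∈ B, ζ n ≠ ζs n) :
    ∃ D ∈ p, D ⊆ B ∧ ∀ n ∈ D, ∀ m ∈ D, ζ n ≠ ζs m := by
  classical
  obtain ⟨g, hgspec⟩ : ∃ g : ℕ → ℕ, ∀ m, (∃ n ∈ B, ζ n = ζs m) → (g m ∈ B ∧ ζ (g m) = ζs m) := by
    refine ⟨fun m => if h : ∃ n ∈ B, ζ n = ζs m then h.choose else m, fun m hm => ?_⟩
    simp only [dif_pos hm]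
    exact ⟨hm.choose_spec.1, hm.choose_spec.2⟩
  have key : ∀ n ∈ B, ∀ m ∈ B, ζ n = ζs m → g m = n ∧ n ≠ m := by
    intro n hn m hm he
    have hex : ∃ n ∈ B, ζ n = ζs m := ⟨n, hn, he⟩
    obtain ⟨h1, h2⟩ := hgspec m hex
    refine ⟨hinj h1 hn (h2.trans he.symm), fun hnm => hdiag m hm (hnm ▸ he)⟩
  rcases Ultrafilter.mem_or_compl_mem p {m | g m = m} with hE | hE
  · refine ⟨B ∩ {m | g m = m}, Filter.inter_mem hB hE, fun n hn => hn.1, ?_⟩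
    rintro n ⟨hnB, _⟩ m ⟨hmB, hmE⟩ he
    obtain ⟨h1, h2⟩ := key n hnB m hmB he
    exact h2 (h1.symm.trans hmE)
  rcases Ultrafilter.mem_or_compl_mem p {m | m < g m} with hUp | hUp
  · obtain ⟨D', hD'p, hD'⟩ := aux_diagLemma hnp hpsel (fun n => {g n}ᶜ)
      (fun n => aux_cofinite_mem hnp (by simp))
    refine ⟨B ∩ ({m | m < g m} ∩ D'), Filter.inter_mem hB (Filter.inter_mem hUp hD'p),
      fun n hn => hn.1, ?_⟩
    rintro n ⟨hnB, hnUp, hnD'⟩ m ⟨hmB, hmUp, hmD'⟩ he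
    obtain ⟨h1, -⟩ := key n hnB m hmB he
    have hlt : m < n := h1 ▸ hmUp
    exact hD' m hmD' n hnD' hlt (h1.symm ▸ rfl)
  · have hDn : {m | g m < m} ∈ p := by
      refine Filter.mem_of_superset (Filter.inter_mem hE hUp) ?_
      rintro m ⟨h1, h2⟩
      simp only [Set.mem_compl_iff, Set.mem_setOf_eq, not_lt] at h1 h2 ⊢
      omega
    by_cases hc : ∃ k, {m | g m = k} ∈ p
    · obtain ⟨k, hk⟩ := hc
      refine ⟨B ∩ ({m | g m = k} ∩ {m | k < m}), Filter.inter_mem hB (Filter.inter_mem hk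
        (aux_cofinite_mem hnp (by
          have : {m | k < m}ᶜ = Set.Iic k := by ext m; simp [not_lt]
          rw [this]; exact Set.finite_Iic k))), fun n hn => hn.1, ?_⟩
      rintro n ⟨hnB, hnk, hnlt⟩ m ⟨hmB, hmk, hmlt⟩ he
      obtain ⟨h1, -⟩ := key n hnB m hmB he
      have h3 : n = k := h1.symm.trans hmk
      have h4 : k < n := hnlt
      omega
    · push_neg at hc
      obtain ⟨D', hD'p, hD'⟩ := aux_diagLemma hnp hpsel (fun n => {m | g m = n}ᶜ)
        (fun n => Ultrafilter.compl_mem_iff_notMem.mpr (hc n))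
      refine ⟨B ∩ ({m | g m < m} ∩ D'), Filter.inter_mem hB (Filter.inter_mem hDn hD'p),
        fun n hn => hn.1, ?_⟩
      rintro n ⟨hnB, hnDn, hnD'⟩ m ⟨hmB, hmDn, hmD'⟩ he
      obtain ⟨h1, h2⟩ := key n hnB m hmB he
      have h4 : g m < m := hmDn
      have hlt : n < m := by omega
      exact hD' n hnD' m hmD' hlt h1

end AuxLemmas

/-- Lemma "Case A". -/
theorem statement11 (κ : Cardinal) (hκ : Cardinal.aleph0 ≤ κ)
    (p : Ultrafilter ℕ) (hp : IsSelective p)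
    (Gc : Set (ℕ → Gk κ)) (hGfin : Gc.Finite)
    (C : Set ℕ) (hC : C ∈ p)
    (ζ ζs : ℕ → Idx κ)
    (gs : ℕ → Gk κ) (hgs : gs ∈ Gc)
    (hgsupp : {n | n ∈ C ∧ ζ n ∈ (gs n).support} ∈ p)
    (hζζs : {n | n ∈ C ∧ ζ n = ζs n} ∉ p) :
    ∃ B' ∈ p, B' ⊆ C ∧
      StarConds Gc ζ ζs B' {g ∈ Gc | ∀ n ∈ B', ζ n ∈ (g n).support} := by
  classical
  by_cases hnp : ∀ n : ℕ, {n} ∉ p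
  · -- nonprincipal case
    have tri : ∀ f g : ℕ → Gk κ, ∃ T : Set ℕ, T ∈ p ∧
        ((∀ n ∈ T, |g n (ζ n)| > |f n (ζ n)|) ∨ (∀ n ∈ T, |g n (ζ n)| = |f n (ζ n)|) ∨
          (∀ n ∈ T, |g n (ζ n)| < |f n (ζ n)|)) := by
      intro f g
      rcases Ultrafilter.mem_or_compl_mem p {n | |f n (ζ n)| < |g n (ζ n)|} with h | h
      · exact ⟨_, h, Or.inl fun n hn => hn⟩
      rcases Ultrafilter.mem_or_compl_mem p {n | |g n (ζ n)| = |f n (ζ n)|} with h2 | h2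
      · exact ⟨_, h2, Or.inr (Or.inl fun n hn => hn)⟩
      refine ⟨_, Filter.inter_mem h h2, Or.inr (Or.inr ?_)⟩
      rintro n ⟨ha, hb⟩
      simp only [Set.mem_compl_iff, Set.mem_setOf_eq, not_lt] at ha hb
      exact lt_of_le_of_ne ha hb
    choose T hTp hTalt using tri
    have suppc : ∀ g : ℕ → Gk κ, ∃ S : Set ℕ, S ∈ p ∧
        ((∀ n ∈ S, ζ n ∈ (g n).support) ∨ (∀ n ∈ S, ζ n ∉ (g n).support)) := by
      intro g
      rcases Ultrafilter.mem_or_compl_mem p {n | ζ n ∈ (g n).support} with h | h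
      · exact ⟨_, h, Or.inl fun n hn => hn⟩
      · exact ⟨_, h, Or.inr fun n hn => hn⟩
    choose S hSp hSalt using suppc
    have ml1 := fun g : ℕ → Gk κ => aux_ml hnp hp (fun n => (g n (ζ n) : ℝ))
    choose Dm hDmp hDmalt using ml1
    have ml2 := fun f g : ℕ → Gk κ =>
      aux_ml hnp hp (fun n => (f n (ζ n) : ℝ) / (g n (ζ n) : ℝ))
    choose Dr hDrp hDralt using ml2
    obtain ⟨D₁, hD₁p, hD₁⟩ := aux_constOrInj hp ζ
    set P1 : Set ℕ := {n | n ∈ C ∧ ζ n ∈ (gs n).support} with hP1def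
    set P2 : Set ℕ := {n | n ∈ C ∧ ζ n = ζs n}ᶜ with hP2def
    set B₂ : Set ℕ :=
      P1 ∩ P2 ∩ D₁ ∩ (⋂ g ∈ Gc, (S g ∩ Dm g)) ∩ (⋂ f ∈ Gc, ⋂ g ∈ Gc, (T f g ∩ Dr f g))
      with hB₂def
    have hB₂p : B₂ ∈ p := by
      refine Filter.inter_mem (Filter.inter_mem (Filter.inter_mem
        (Filter.inter_mem hgsupp (Ultrafilter.compl_mem_iff_notMem.mpr hζζs)) hD₁p) ?_) ?_
      · exact (Filter.biInter_mem hGfin).mpr fun g _ => Filter.inter_mem (hSp g) (hDmp g)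
      · exact (Filter.biInter_mem hGfin).mpr fun f _ =>
          (Filter.biInter_mem hGfin).mpr fun g _ => Filter.inter_mem (hTp f g) (hDrp f g)
    have hB₂P1 : ∀ n ∈ B₂, n ∈ C ∧ ζ n ∈ (gs n).support := fun n hn => hn.1.1.1.1
    have hB₂P2 : ∀ n ∈ B₂, ¬(n ∈ C ∧ ζ n = ζs n) := fun n hn => hn.1.1.1.2
    have hB₂D₁ : ∀ n ∈ B₂, n ∈ D₁ := fun n hn => hn.1.1.2
    have hB₂SD : ∀ g ∈ Gc, ∀ n ∈ B₂, n ∈ S g ∧ n ∈ Dm g := by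
      intro g hg n hn
      have := Set.mem_iInter₂.mp hn.1.2 g hg
      exact ⟨this.1, this.2⟩
    have hB₂T : ∀ f ∈ Gc, ∀ g ∈ Gc, ∀ n ∈ B₂, n ∈ T f g ∧ n ∈ Dr f g := by
      intro f hf g hg n hn
      have := Set.mem_iInter₂.mp (Set.mem_iInter₂.mp hn.2 f hf) g hg
      exact ⟨this.1, this.2⟩
    have main : ∀ B' : Set ℕ, B' ∈ p → B' ⊆ B₂ →
        ((∃ ν : Idx κ, ∀ n ∈ B', ζ n = ν) ∨ Set.InjOn ζ B') →
        (∀ n ∈ B', ∀ m ∈ B', ζ n ≠ ζs m) →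
        B' ⊆ C ∧ StarConds Gc ζ ζs B' {g ∈ Gc | ∀ n ∈ B', ζ n ∈ (g n).support} := by
      intro B' hB'p hsub h1 h7
      obtain ⟨n₀, hn₀⟩ := Ultrafilter.nonempty_of_mem hB'p
      have hsubC : B' ⊆ C := fun n hn => (hB₂P1 n (hsub hn)).1
      refine ⟨hsubC, h1, ?_, ⟨rfl, ⟨gs, hgs, fun n hn => (hB₂P1 n (hsub hn)).2⟩⟩,
        ?_, ?_, ?_, h7⟩
      · intro g hg
        rcases hSalt g with h | h
        · exact Or.inl fun n hn => h n (hB₂SD g hg n (hsub hn)).1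
        · exact Or.inr fun n hn => h n (hB₂SD g hg n (hsub hn)).1
      · rintro g ⟨hgGc, -⟩
        have hsubD : B' ⊆ Dm g := fun n hn => (hB₂SD g hgGc n (hsub hn)).2
        rcases hDmalt g with ⟨c, hc⟩ | h | h
        · refine Or.inr ⟨g n₀ (ζ n₀), fun n hn => ?_⟩
          have e1 : ((g n (ζ n) : ℚ) : ℝ) = c := hc n (hsubD hn)
          have e2 : ((g n₀ (ζ n₀) : ℚ) : ℝ) = c := hc n₀ (hsubD hn₀)
          exact_mod_cast e1.trans e2.symm
        · exact Or.inl ⟨Or.inl (h.mono hsubD),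
            aux_monoConv ⟨n₀, hn₀⟩ ((h.mono hsubD).monotoneOn)⟩
        · exact Or.inl ⟨Or.inr (h.mono hsubD),
            aux_antiConv ⟨n₀, hn₀⟩ ((h.mono hsubD).antitoneOn)⟩
      · rintro f ⟨hfGc, -⟩ g ⟨hgGc, -⟩
        rcases hTalt f g with h | h | h
        · exact Or.inl fun n hn => h n (hB₂T f hfGc g hgGc n (hsub hn)).1
        · exact Or.inr (Or.inl fun n hn => h n (hB₂T f hfGc g hgGc n (hsub hn)).1)
        · exact Or.inr (Or.inr fun n hn => h n (hB₂T f hfGc g hgGc n (hsub hn)).1)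
      · rintro g ⟨hgGc, -⟩ h ⟨hhGc, -⟩
        have hsubD : B' ⊆ Dr g h := fun n hn => (hB₂T g hgGc h hhGc n (hsub hn)).2
        rcases hDralt g h with ⟨c, hc⟩ | hm | hm
        · exact aux_constConv (fun n hn => hc n (hsubD hn))
        · exact aux_monoConv ⟨n₀, hn₀⟩ ((hm.mono hsubD).monotoneOn)
        · exact aux_antiConv ⟨n₀, hn₀⟩ ((hm.mono hsubD).antitoneOn)
    rcases hD₁ with ⟨ν, hν⟩ | hinjD₁
    · have hνB₂ : ∀ n ∈ B₂, ζ n = ν := fun n hn => hν n (hB₂D₁ n hn)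
      have hbad : {m | ζs m = ν} ∉ p := by
        intro hmem
        obtain ⟨m, hm1, hm2⟩ := Ultrafilter.nonempty_of_mem (Filter.inter_mem hB₂p hmem)
        exact (hB₂P2 m hm1) ⟨(hB₂P1 m hm1).1,
          (hνB₂ m hm1).trans (show ζs m = ν from hm2).symm⟩
      have hgood : {m | ζs m ≠ ν} ∈ p := by
        have := Ultrafilter.compl_mem_iff_notMem.mpr hbad
        rwa [Set.compl_setOf] at this
      obtain ⟨hx1, hx2⟩ := main (B₂ ∩ {m | ζs m ≠ ν}) (Filter.inter_mem hB₂p hgood)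
        (fun n hn => hn.1) (Or.inl ⟨ν, fun n hn => hνB₂ n hn.1⟩)
        (fun n hn m hm => by rw [hνB₂ n hn.1]; exact fun hh => hm.2 hh.symm)
      exact ⟨_, Filter.inter_mem hB₂p hgood, hx1, hx2⟩
    · have hinjB₂ : Set.InjOn ζ B₂ := hinjD₁.mono (fun n hn => hB₂D₁ n hn)
      have hdiag : ∀ n ∈ B₂, ζ n ≠ ζs n := fun n hn hh => (hB₂P2 n hn) ⟨(hB₂P1 n hn).1, hh⟩
      obtain ⟨D, hDp, hDsub, hDfree⟩ := aux_freeSet hnp hp ζ ζs B₂ hB₂p hinjB₂ hdiag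
      obtain ⟨hx1, hx2⟩ := main D hDp hDsub (Or.inr (hinjB₂.mono hDsub)) hDfree
      exact ⟨D, hDp, hx1, hx2⟩
  · -- principal case
    obtain ⟨n₀, hn₀⟩ : ∃ n : ℕ, ({n} : Set ℕ) ∈ p := by
      simpa [not_forall, not_not] using hnp
    have hmemn₀ : ∀ {U : Set ℕ}, U ∈ p → n₀ ∈ U := by
      intro U hU
      obtain ⟨m, hm1, hm2⟩ := Ultrafilter.nonempty_of_mem (Filter.inter_mem hn₀ hU)
      rwa [Set.mem_singleton_iff.mp hm1] at hm2
    have hC0 : n₀ ∈ C ∧ ζ n₀ ∈ (gs n₀).support := hmemn₀ hgsupp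
    have hne : ζ n₀ ≠ ζs n₀ := by
      intro hh
      refine hζζs (Filter.mem_of_superset hn₀ ?_)
      intro m hm
      rw [Set.mem_singleton_iff.mp hm]
      exact ⟨hC0.1, hh⟩
    have hbot : (atTop ⊓ 𝓟 ({n₀} : Set ℕ)) = ⊥ := by
      rw [← Filter.empty_mem_iff_bot]
      refine Filter.mem_of_superset
        (Filter.inter_mem_inf (Filter.mem_atTop (n₀+1)) (Filter.mem_principal_self {n₀})) ?_
      rintro m ⟨h1, h2⟩
      rw [Set.mem_singleton_iff.mp h2] at h1
      have h3 : n₀ + 1 ≤ n₀ := h1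
      omega
    have hconv : ∀ x : ℕ → ℝ, ConvETo {n₀} x := by
      intro x
      exact Or.inl ⟨0, by rw [hbot]; exact tendsto_bot⟩
    refine ⟨{n₀}, hn₀, ?_, ?_⟩
    · intro n hn
      rw [Set.mem_singleton_iff.mp hn]
      exact hC0.1
    refine ⟨Or.inl ⟨ζ n₀, fun n hn => by rw [Set.mem_singleton_iff.mp hn]⟩, ?_, ⟨rfl, ?_⟩,
      ?_, ?_, ?_, ?_⟩
    · intro g hg
      by_cases hh : ζ n₀ ∈ (g n₀).support
      · exact Or.inl fun n hn => by rw [Set.mem_singleton_iff.mp hn]; exact hh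
      · exact Or.inr fun n hn => by rw [Set.mem_singleton_iff.mp hn]; exact hh
    · exact ⟨gs, hgs, fun n hn => by rw [Set.mem_singleton_iff.mp hn]; exact hC0.2⟩
    · rintro g -
      exact Or.inr ⟨g n₀ (ζ n₀), fun n hn => by rw [Set.mem_singleton_iff.mp hn]⟩
    · rintro f - g -
      rcases lt_trichotomy |f n₀ (ζ n₀)| |g n₀ (ζ n₀)| with h | h | h
      · exact Or.inl fun n hn => by rw [Set.mem_singleton_iff.mp hn]; exact h
      · exact Or.inr (Or.inl fun n hn => by rw [Set.mem_singleton_iff.mp hn]; exact h.symm)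
      · exact Or.inr (Or.inr fun n hn => by rw [Set.mem_singleton_iff.mp hn]; exact h)
    · rintro g - h -
      exact hconv _
    · intro n hn m hm
      rw [Set.mem_singleton_iff.mp hn, Set.mem_singleton_iff.mp hm]
      exact hne


end
end

section
/- Let p be a selective ultrafilter on ω, 𝒢 a finite subset of G^ω, C ∈ p, ζ, ζ* ∈ κ^ω, and suppose B' ∈ p with B' ⊆ C and 𝓗 ⊆ 𝒢 satisfy conditions (⋆1)–(⋆7). Suppose g# ∈ 𝓗 is such that for every g ∈ 𝓗 the sequence (g(n)(ζ(n))/g#(n)(ζ(n)))_{n∈B'} converges to a real number (equivalently, is bounded). Then there exist B ∈ p with B ⊆ B', 𝓑 ⊆ 𝓗, a map σ : 𝓗∖𝓑 → G^ω, and a family of real numbers (θ_{g#,g} : g ∈ 𝓗) such that: (⋆9) g# ∈ 𝓑; (⋆10) (g(n)(ζ(n))/g#(n)(ζ(n)))_{n∈B} converges to θ_{g#,g} for every g ∈ 𝓗; (⋆11) (θ_{g#,g} : g ∈ 𝓑) is ℚ-linearly independent and generates the same ℚ-vector subspace of ℝ as (θ_{g#,g} : g ∈ 𝓗); (⋆12)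 for each g ∈ 𝓗∖𝓑, the sets 𝓑 ∪ {g} and 𝓑 ∪ {σ(g)} generate the same ℚ-vector subspace of G^ω; (⋆13) for each g ∈ 𝓗∖𝓑 and h ∈ 𝓑, (σ(g)(n)(ζ(n))/h(n)(ζ(n)))_{n∈B} converges to 0; (⋆14) if g ∈ 𝓗∖𝓑 and θ_{g#,g} = 0, then σ(g) = g; (⋆15) if ζ is constant with value ν, 𝓑 = {χ_{→ν}}, and there exists g* ∈ 𝓗 such that (g*(n)(ν))_{n∈B} is not constant mod p, then {n ∈ ω : ν ∈ supp σ(g*)(n)} ∈ p. -/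
open Filter Topology Set Pointwise

noncomputable section

private theorem span_union_sub {M : Type*} [AddCommGroup M] [Module ℚ M]
    (A : Set M) (g s : M) (hs : s ∈ Submodule.span ℚ A) :
    Submodule.span ℚ (A ∪ {g}) = Submodule.span ℚ (A ∪ {g - s}) := by
  have hA : Submodule.span ℚ A ≤ Submodule.span ℚ (A ∪ {g}) :=
    Submodule.span_mono Set.subset_union_left
  have hA' : Submodule.span ℚ A ≤ Submodule.span ℚ (A ∪ {g - s}) :=
    Submodule.span_mono Set.subset_union_left
  apply le_antisymm <;> rw [Submodule.span_le] <;> rintro x hx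
  · rcases hx with hx | hx
    · exact Submodule.subset_span (Or.inl hx)
    · rw [Set.mem_singleton_iff] at hx
      rw [hx]
      have h1 : g - s ∈ Submodule.span ℚ (A ∪ {g - s}) :=
        Submodule.subset_span (Set.mem_union_right _ rfl)
      have h2 := Submodule.add_mem _ h1 (hA' hs)
      simpa using h2
  · rcases hx with hx | hx
    · exact Submodule.subset_span (Or.inl hx)
    · rw [Set.mem_singleton_iff] at hx
      rw [hx]
      exact Submodule.sub_mem _ (Submodule.subset_span (Set.mem_union_right _ rfl)) (hA hs)

/-- Lemma "Case A2". -/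
theorem statement12 (κ : Cardinal) (hκ : Cardinal.aleph0 ≤ κ)
    (p : Ultrafilter ℕ) (hp : IsSelective p)
    (Gc : Set (ℕ → Gk κ)) (hGfin : Gc.Finite)
    (C : Set ℕ) (hC : C ∈ p)
    (ζ ζs : ℕ → Idx κ)
    (B' : Set ℕ) (hB' : B' ∈ p) (hB'C : B' ⊆ C)
    (H : Set (ℕ → Gk κ)) (hH : H ⊆ Gc)
    (hstar : StarConds Gc ζ ζs B' H)
    (gsharp : ℕ → Gk κ) (hgsharp : gsharp ∈ H)
    (hbound : ∀ g ∈ H, ∃ c : ℝ,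
      Filter.Tendsto (fun n => (g n (ζ n) : ℝ) / (gsharp n (ζ n) : ℝ))
        (Filter.atTop ⊓ Filter.principal B') (nhds c)) :
    ∃ B ∈ p, B ⊆ B' ∧
      ∃ Bf : Set (ℕ → Gk κ), Bf ⊆ H ∧
        ∃ σ : (ℕ → Gk κ) → (ℕ → Gk κ), ∃ θ : (ℕ → Gk κ) → ℝ,
          -- (⋆9)
          gsharp ∈ Bf ∧
          -- (⋆10)
          (∀ g ∈ H, Filter.Tendsto (fun n => (g n (ζ n) : ℝ) / (gsharp n (ζ n) : ℝ))
            (Filter.atTop ⊓ Filter.principal B) (nhds (θ g))) ∧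
          -- (⋆11)
          (LinearIndependent ℚ (fun g : Bf => θ g.1) ∧
            Submodule.span ℚ (θ '' Bf) = Submodule.span ℚ (θ '' H)) ∧
          -- (⋆12)
          (∀ g ∈ H \ Bf,
            Submodule.span ℚ (Bf ∪ {g}) = Submodule.span ℚ (Bf ∪ {σ g})) ∧
          -- (⋆13)
          (∀ g ∈ H \ Bf, ∀ h ∈ Bf,
            Filter.Tendsto (fun n => (σ g n (ζ n) : ℝ) / (h n (ζ n) : ℝ))
              (Filter.atTop ⊓ Filter.principal B) (nhds 0)) ∧
          -- (⋆14)
          (∀ g ∈ H \ Bf, θ g = 0 → σ g = g) ∧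
          -- (⋆15)
          (∀ ν : Idx κ, (∀ n, ζ n = ν) → Bf = {fun _ => chi ν} →
            ∀ gst ∈ H, (∀ c : ℚ, {n | n ∈ B ∧ gst n ν = c} ∉ p) →
              {n | ν ∈ (σ gst n).support} ∈ p) := by
  classical
  obtain ⟨h1, h2, ⟨hHdef, hHne⟩, h4, h5, h6, h7⟩ := hstar
  have hHfin : H.Finite := hGfin.subset hH
  have hne : ∀ g ∈ H, ∀ n ∈ B', (g n) (ζ n) ≠ 0 := by
    intro g hg n hn
    have hg' : g ∈ {g ∈ Gc | ∀ n ∈ B', ζ n ∈ (g n).support} := hHdef ▸ hg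
    exact Finsupp.mem_support_iff.mp (hg'.2 n hn)
  by_cases hbot : (Filter.atTop ⊓ Filter.principal B' : Filter ℕ) = ⊥
  · -- degenerate case: the filter is trivial
    refine ⟨B', hB', subset_rfl, {gsharp}, Set.singleton_subset_iff.mpr hgsharp,
      id, (fun g => if g = gsharp then 1 else 0), rfl, ?_, ⟨?_, ?_⟩, ?_, ?_, ?_, ?_⟩
    · intro g hg; rw [hbot]; exact tendsto_bot
    · haveI : Unique ↥({gsharp} : Set (ℕ → Gk κ)) := Set.uniqueSingleton gsharp
      apply linearIndependent_unique_iff.mpr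
      have hd : ((default : ↥({gsharp} : Set (ℕ → Gk κ))) : ℕ → Gk κ) = gsharp :=
        (default : ↥({gsharp} : Set (ℕ → Gk κ))).2
      simp [hd]
    · apply le_antisymm <;> rw [Submodule.span_le] <;> rintro x ⟨g, hg, rfl⟩
      · have hgg := Set.mem_singleton_iff.mp hg
        rw [hgg]
        exact Submodule.subset_span ⟨gsharp, hgsharp, rfl⟩
      · by_cases hgs : g = gsharp
        · rw [hgs]
          exact Submodule.subset_span ⟨gsharp, rfl, rfl⟩
        · simp only [if_neg hgs]
          exact Submodule.zero_mem _
    · intro g hg; rfl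
    · intro g hg h hh; rw [hbot]; exact tendsto_bot
    · intro g hg hθ; rfl
    · intro ν hν hBf gst hgst hc
      refine Filter.mem_of_superset hB' ?_
      intro n hn
      have := (hHdef ▸ hgst : gst ∈ {g ∈ Gc | ∀ n ∈ B', ζ n ∈ (g n).support}).2 n hn
      simpa [hν n] using this
  · -- main case
    haveI hFne : (Filter.atTop ⊓ Filter.principal B' : Filter ℕ).NeBot := ⟨hbot⟩
    have hB'F : B' ∈ (Filter.atTop ⊓ Filter.principal B' : Filter ℕ) :=
      Filter.mem_inf_of_right (Filter.mem_principal_self B')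
    let θ : (ℕ → Gk κ) → ℝ := fun g => if hg : g ∈ H then (hbound g hg).choose else 0
    have hθ : ∀ g ∈ H, Filter.Tendsto (fun n => (g n (ζ n) : ℝ) / (gsharp n (ζ n) : ℝ))
        (Filter.atTop ⊓ Filter.principal B') (nhds (θ g)) := by
      intro g hg
      simp only [θ, dif_pos hg]
      exact (hbound g hg).choose_spec
    have hθsharp : θ gsharp = 1 := by
      refine tendsto_nhds_unique (hθ gsharp hgsharp) ?_
      refine Filter.Tendsto.congr' ?_ tendsto_const_nhds
      filter_upwards [hB'F] with n hn
      have : ((gsharp n) (ζ n) : ℝ) ≠ 0 := by exact_mod_cast hne gsharp hgsharp n hn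
      rw [div_self this]
    -- extend {1} to a basis of the span of θ '' H
    have h1mem : (1 : ℝ) ∈ θ '' H := ⟨gsharp, hgsharp, hθsharp⟩
    have hsing : LinearIndependent ℚ ((↑) : ({(1 : ℝ)} : Set ℝ) → ℝ) :=
      (linearIndepOn_singleton_iff ℚ (v := id) (i := (1 : ℝ))).mpr one_ne_zero
    obtain ⟨b, hbsub, hb1, hbspan, hbind⟩ :=
      exists_linearIndepOn_extension (v := id) hsing (Set.singleton_subset_iff.mpr h1mem)
    rw [Set.image_id, Set.image_id] at hbspan
    replace hbind : LinearIndependent ℚ ((↑) : b → ℝ) := hbind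
    have hrex : ∀ x ∈ b, ∃ g ∈ H, θ g = x := fun x hx => hbsub hx
    let r : ℝ → (ℕ → Gk κ) := fun x =>
      if x = 1 then gsharp else if hx : x ∈ b then (hrex x hx).choose else gsharp
    have hrH : ∀ x ∈ b, r x ∈ H ∧ θ (r x) = x := by
      intro x hx
      by_cases hx1 : x = 1
      · subst hx1; simp only [r, if_pos rfl]; exact ⟨hgsharp, hθsharp⟩
      · simp only [r, if_neg hx1, dif_pos hx]
        exact ⟨(hrex x hx).choose_spec.1, (hrex x hx).choose_spec.2⟩
    set Bf : Set (ℕ → Gk κ) := r '' b with hBfdef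
    have hBfH : Bf ⊆ H := by rintro _ ⟨x, hx, rfl⟩; exact (hrH x hx).1
    have hθBf : θ '' Bf = b := by
      ext y; constructor
      · rintro ⟨_, ⟨x, hx, rfl⟩, rfl⟩; rw [(hrH x hx).2]; exact hx
      · intro hy; exact ⟨r y, ⟨y, hy, rfl⟩, (hrH y hy).2⟩
    have hret : ∀ g ∈ Bf, r (θ g) = g ∧ θ g ∈ b := by
      rintro _ ⟨x, hx, rfl⟩
      rw [(hrH x hx).2]; exact ⟨rfl, hx⟩
    have hgsBf : gsharp ∈ Bf := ⟨1, hb1 rfl, by simp only [r, if_pos rfl]⟩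
    have hBfind : LinearIndependent ℚ (fun g : Bf => θ g.1) := by
      have hinj : Function.Injective
          (fun g : Bf => (⟨θ g.1, (hret g.1 g.2).2⟩ : b)) := by
        intro g1 g2 hgg
        have heq : θ g1.1 = θ g2.1 := congrArg Subtype.val hgg
        apply Subtype.ext
        rw [← (hret g1.1 g1.2).1, ← (hret g2.1 g2.2).1, heq]
      exact hbind.comp _ hinj
    have hθne : ∀ h ∈ Bf, θ h ≠ 0 := fun h hh =>
      LinearIndependent.ne_zero (⟨h, hh⟩ : Bf) hBfind
    have hBffin : Bf.Finite := hHfin.subset hBfH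
    haveI : Fintype ↥Bf := hBffin.fintype
    have hspanθ : Submodule.span ℚ (θ '' Bf) = Submodule.span ℚ (θ '' H) := by
      rw [hθBf]
      exact le_antisymm (Submodule.span_mono hbsub) (Submodule.span_le.mpr hbspan)
    have hrange : Set.range (fun h : Bf => θ h.1) = b := by
      rw [← hθBf, Set.image_eq_range]
    have hmem : ∀ g ∈ H, θ g ∈ Submodule.span ℚ (Set.range (fun h : Bf => θ h.1)) := by
      intro g hg
      rw [hrange]
      exact hbspan ⟨g, hg, rfl⟩
    let coef : (ℕ → Gk κ) → ↥Bf → ℚ := fun g =>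
      if hg : θ g ∈ Submodule.span ℚ (Set.range (fun h : Bf => θ h.1)) then
        ((Submodule.mem_span_range_iff_exists_fun ℚ).mp hg).choose else 0
    have hcoef : ∀ g ∈ H, ∑ h : Bf, coef g h • θ h.1 = θ g := by
      intro g hg
      simp only [coef, dif_pos (hmem g hg)]
      exact ((Submodule.mem_span_range_iff_exists_fun ℚ).mp (hmem g hg)).choose_spec
    set σ : (ℕ → Gk κ) → (ℕ → Gk κ) :=
      fun g => g - ∑ h : Bf, (coef g h : ℚ) • h.1 with hσdef
    -- key evaluation formula
    have hσval : ∀ g n, ((σ g n) (ζ n) : ℝ)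
        = (g n (ζ n) : ℝ) - ∑ h' : Bf, (coef g h' : ℝ) * ((h'.1 n) (ζ n) : ℝ) := by
      intro g n
      have : (σ g n) (ζ n) = g n (ζ n) - ∑ h' : Bf, coef g h' * ((h'.1 n) (ζ n)) := by
        simp [hσdef, Finsupp.finset_sum_apply]
      rw [this]
      push_cast
      ring
    refine ⟨B', hB', subset_rfl, Bf, hBfH, σ, θ, hgsBf, hθ, ⟨hBfind, hspanθ⟩, ?_, ?_, ?_, ?_⟩
    · -- (⋆12)
      intro g hg
      have hsmem : (∑ h : Bf, (coef g h : ℚ) • h.1) ∈ Submodule.span ℚ Bf :=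
        Submodule.sum_mem _ fun h _ => Submodule.smul_mem _ _ (Submodule.subset_span h.2)
      exact span_union_sub Bf g _ hsmem
    · -- (⋆13)
      intro g hg h hh
      have hσgs : Filter.Tendsto (fun n => ((σ g n) (ζ n) : ℝ) / (gsharp n (ζ n) : ℝ))
          (Filter.atTop ⊓ Filter.principal B') (nhds 0) := by
        have hlim : Filter.Tendsto
            (fun n => (g n (ζ n) : ℝ) / (gsharp n (ζ n) : ℝ)
              - ∑ h' : Bf, (coef g h' : ℝ) * (((h'.1 n) (ζ n) : ℝ) / (gsharp n (ζ n) : ℝ)))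
            (Filter.atTop ⊓ Filter.principal B')
            (nhds (θ g - ∑ h' : Bf, (coef g h' : ℝ) * θ h'.1)) :=
          (hθ g hg.1).sub (tendsto_finset_sum _ fun h' _ =>
            ((hθ h'.1 (hBfH h'.2)).const_mul _))
        have hzero : θ g - ∑ h' : Bf, (coef g h' : ℝ) * θ h'.1 = 0 := by
          rw [sub_eq_zero, ← hcoef g hg.1]
          exact Finset.sum_congr rfl fun h' _ => (Rat.smul_def _ _).symm
        rw [hzero] at hlim
        refine hlim.congr fun n => ?_
        rw [hσval g n, sub_div, Finset.sum_div]
        congr 1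
        exact Finset.sum_congr rfl fun h' _ => (mul_div_assoc _ _ _).symm
      have hinv : Filter.Tendsto (fun n => (gsharp n (ζ n) : ℝ) / ((h n) (ζ n) : ℝ))
          (Filter.atTop ⊓ Filter.principal B') (nhds (θ h)⁻¹) := by
        have := ((hθ h (hBfH hh)).inv₀ (hθne h hh))
        refine this.congr fun n => ?_
        rw [inv_div]
      have hprod := hσgs.mul hinv
      rw [zero_mul] at hprod
      refine hprod.congr' ?_
      filter_upwards [hB'F] with n hn
      have hgs0 : (gsharp n (ζ n) : ℝ) ≠ 0 := by exact_mod_cast hne gsharp hgsharp n hn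
      rw [div_mul_div_comm, mul_comm ((σ g n) (ζ n) : ℝ) ((gsharp n) (ζ n) : ℝ),
        mul_div_mul_left _ _ hgs0]
    · -- (⋆14)
      intro g hg hθg
      have hsum := hcoef g hg.1
      rw [hθg] at hsum
      have hc0 := Fintype.linearIndependent_iff.mp hBfind _ hsum
      show g - _ = g
      rw [Finset.sum_eq_zero fun h' _ => by rw [hc0 h', zero_smul], sub_zero]
    · -- (⋆15)
      intro ν hν hBfeq gst hgst hc
      set q : ℚ := ∑ h : Bf, coef gst h with hq
      have hσ15 : ∀ n, (σ gst n) ν = gst n ν - q := by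
        intro n
        have hval : ∀ h : ↥Bf, (h.1 n) ν = 1 := by
          intro h
          have hmem' : h.1 ∈ ({fun _ => chi ν} : Set (ℕ → Gk κ)) := hBfeq ▸ h.2
          rw [Set.mem_singleton_iff] at hmem'
          rw [hmem']
          simp [chi]
        have : (σ gst n) ν = gst n ν - ∑ h : Bf, coef gst h * ((h.1 n) ν) := by
          simp [hσdef, Finsupp.finset_sum_apply]
        rw [this, hq]
        congr 1
        exact Finset.sum_congr rfl fun h _ => by rw [hval h, mul_one]
      by_contra hnot
      apply hc q
      have h2 : ({n | ν ∈ (σ gst n).support})ᶜ ∈ p :=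
        Ultrafilter.compl_mem_iff_notMem.mpr hnot
      have h3 : {n | n ∈ B' ∧ gst n ν = q} = B' ∩ ({n | ν ∈ (σ gst n).support})ᶜ := by
        ext n
        simp [Set.mem_compl_iff, Finsupp.notMem_support_iff, hσ15 n, sub_eq_zero]
      rw [h3]
      exact Filter.inter_mem hB' h2

end
end
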